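/- arXiv:2201.07868 — 10 statements merged into one kernel-verified Lean document; each statement's English description precedes it below -/
import Mathlib

section
/- Let d ≥ 2, m ≥ 2, n ≥ 1 be integers, let ζ ≠ 1 be a d-th root of unity, and let f(z) = z^d + c₀ for some c₀ ∈ ℂ. Write a_i = f^i(0). Suppose k is the smallest positive divisor of n such that a_{m+k-1} = ζ·a_{m-1}. Then for any positive divisor ℓ of n, we have a_{m+ℓ-1} = ζ·a_{m-1} if and only if k divides ℓ. -/
/-- For f(z) = z^d + c₀ over ℂ, a_i = f^i(0); if k is the smallest
positive divisor of n with a_{m+k-1} = ζ a_{m-1}, then for ℓ ∣ n,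
a_{m+ℓ-1} = ζ a_{m-1} ↔ k ∣ ℓ. -/
theorem stmt0 (d m n : ℕ) (hd : 2 ≤ d) (hm : 2 ≤ m) (hn : 1 ≤ n)
    (c₀ ζ : ℂ) (hζd : ζ ^ d = 1) (hζ1 : ζ ≠ 1)
    (a : ℕ → ℂ) (ha0 : a 0 = 0) (haS : ∀ i, a (i + 1) = a i ^ d + c₀)
    (k : ℕ) (hkdvd : k ∣ n) (hkpos : 0 < k)
    (hk : a (m + k - 1) = ζ * a (m - 1))
    (hkmin : ∀ k', k' ∣ n → 0 < k' → a (m + k' - 1) = ζ * a (m - 1) → k ≤ k')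
    (ℓ : ℕ) (hℓdvd : ℓ ∣ n) (hℓpos : 0 < ℓ) :
    a (m + ℓ - 1) = ζ * a (m - 1) ↔ k ∣ ℓ := by
  -- periodicity: if a_{m+y-1} = ζ a_{m-1}, then a_{i+y} = a_i for i ≥ m
  have per : ∀ y : ℕ, a (m + y - 1) = ζ * a (m - 1) → ∀ i, m ≤ i → a (i + y) = a i := by
    intro y hy
    have base : a (m + y) = a m := by
      have h1 : m + y = (m + y - 1) + 1 := by omega
      have h2 : m = (m - 1) + 1 := by omega
      rw [h1, haS, hy, mul_pow, hζd, one_mul, h2, haS]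
      simp
    intro i hi
    induction i, hi using Nat.le_induction with
    | base => exact base
    | succ j hj ih =>
      have : j + 1 + y = (j + y) + 1 := by omega
      rw [this, haS, ih, haS]
  -- closure under gcd
  have gcdS : ∀ N x y, x + y ≤ N → 0 < x → 0 < y →
      a (m + x - 1) = ζ * a (m - 1) → a (m + y - 1) = ζ * a (m - 1) →
      a (m + Nat.gcd x y - 1) = ζ * a (m - 1) := by
    intro N
    induction N with
    | zero => intro x y h hx; omega
    | succ N ih =>
      intro x y hN hx hy hax hay
      rcases lt_trichotomy x y with h | h | h
      · -- x < y : replace y by y - x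
        have hsub : a (m + (y - x) - 1) = ζ * a (m - 1) := by
          have := per x hax (m + (y - x) - 1) (by omega)
          have he : m + (y - x) - 1 + x = m + y - 1 := by omega
          rw [he, hay] at this
          exact this.symm
        rw [← Nat.gcd_sub_self_right h.le]
        exact ih x (y - x) (by omega) hx (by omega) hax hsub
      · subst h
        rwa [Nat.gcd_self]
      · -- y < x
        have hsub : a (m + (x - y) - 1) = ζ * a (m - 1) := by
          have := per y hay (m + (x - y) - 1) (by omega)
          have he : m + (x - y) - 1 + y = m + x - 1 := by omega
          rw [he, hax] at this
          exact this.symm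
        rw [← Nat.gcd_sub_self_left h.le]
        exact ih (x - y) y (by omega) (by omega) hy hsub hay
  constructor
  · intro hℓ
    set g := Nat.gcd k ℓ with hgdef
    have hg : a (m + g - 1) = ζ * a (m - 1) :=
      gcdS (k + ℓ) k ℓ le_rfl hkpos hℓpos hk hℓ
    have hgdvdn : g ∣ n := (Nat.gcd_dvd_left k ℓ).trans hkdvd
    have hgpos : 0 < g := Nat.gcd_pos_of_pos_left ℓ hkpos
    have hle : k ≤ g := hkmin g hgdvdn hgpos hg
    have hge : g ≤ k := Nat.le_of_dvd hkpos (Nat.gcd_dvd_left k ℓ)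
    have : g = k := le_antisymm hge hle
    rw [← this]
    exact Nat.gcd_dvd_right k ℓ
  · rintro ⟨q, rfl⟩
    have hq : 0 < q := by
      rcases Nat.eq_zero_or_pos q with h | h
      · subst h; simp at hℓpos
      · exact h
    obtain ⟨q', rfl⟩ : ∃ q', q = q' + 1 := ⟨q - 1, by omega⟩
    -- a (m + k - 1 + k*j) = a (m + k - 1) for all j
    have iter : ∀ j : ℕ, a (m + k - 1 + k * j) = a (m + k - 1) := by
      intro j
      induction j with
      | zero => rfl
      | succ j ih =>
        have he : m + k - 1 + k * (j + 1) = (m + k - 1 + k * j) + k := by rw [Nat.mul_add, Nat.mul_one]; omega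
        rw [he, per k hk _ (by omega), ih]
    have he : m + k * (q' + 1) - 1 = m + k - 1 + k * q' := by rw [Nat.mul_add, Nat.mul_one]; omega
    rw [he, iter q', hk]
end

section
/- Let p be a prime, e ≥ 1 an integer, d = p^e, and let a, b, c₀ ∈ ℂ_p with |a|_p = |b|_p > 0. Define f(z) = z^d + c₀. If |f(a) − f(b)|_p ≥ |p|_p^{p/(p−1)} · |b|_p^d, then |f(a) − f(b)|_p = |a − b|_p^d. -/
/-!
Write `a ^ p - b ^ p = (a - b) ^ p + E`. Every binomial coefficient in `E` is divisible by `p`, so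
`‖E‖ ≤ ‖p‖ ‖b‖ ^ (p - 1) ‖a - b‖ = (ρ ‖b‖) ^ (p - 1) ‖a - b‖` with `ρ = ‖p‖ ^ (1 / (p - 1))`.
By the ultrametric inequality, `E` is negligible against `(a - b) ^ p` when `‖a - b‖ > ρ ‖b‖`,
while for `‖a - b‖ ≤ ρ ‖b‖` it forces `‖a ^ p - b ^ p‖ ≤ (ρ ‖b‖) ^ p`, with equality only if
`‖a - b‖ = ρ ‖b‖`. Either way the lower bound `(ρ ‖b‖) ^ p ≤ ‖a ^ p - b ^ p‖` gives
`‖a ^ p - b ^ p‖ = ‖a - b‖ ^ p`.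

For `d = p ^ e` apply this to `a ^ p ^ k, b ^ p ^ k` and induct on `k`: the lower bound at level
`k + 1` yields `‖a ^ p ^ k - b ^ p ^ k‖ ≥ ρ ‖b‖ ^ p ^ k ≥ ρ ^ p ‖b‖ ^ p ^ k`, as `ρ ≤ 1`, which is
the lower bound at level `k`.
-/

open Finset IsUltrametricDist

theorem pow_sub_pow_sub_sub_pow_eq_sum {R : Type*} [CommRing R] {p : ℕ} (hp : 0 < p) (a b : R) :
    a ^ p - b ^ p - (a - b) ^ p
      = ∑ k ∈ Ioo 0 p, b ^ k * (a - b) ^ (p - k) * (p.choose k : R) := by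
  rw [show a ^ p = (b + (a - b)) ^ p by ring, add_pow, sum_range_succ, range_eq_Ico,
    sum_eq_sum_Ico_succ_bot hp, show Ico (0 + 1) p = Ioo 0 p from rfl]
  simp

theorem pow_mul_pow_sub_le_pow_pred_mul {t r : ℝ} (ht : 0 ≤ t) (htr : t ≤ r) {k p : ℕ}
    (hk : k < p) : r ^ k * t ^ (p - k) ≤ r ^ (p - 1) * t := by
  obtain ⟨m, rfl⟩ := Nat.exists_eq_add_of_lt hk
  rw [show k + m + 1 - k = m + 1 by omega, show k + m + 1 - 1 = k + m by omega, pow_succ,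
    pow_add, ← mul_assoc]
  have hr : 0 ≤ r := ht.trans htr
  gcongr

section Ultrametric

variable {𝕜 : Type*} [NormedField 𝕜] [IsUltrametricDist 𝕜]

theorem norm_sub_le_of_norm_le {a b : 𝕜} (hab : ‖a‖ ≤ ‖b‖) : ‖a - b‖ ≤ ‖b‖ := by
  simpa [sub_eq_add_neg, hab] using norm_add_le_max a (-b)

theorem norm_choose_le_norm_prime {p k : ℕ} (hp : p.Prime) (hk0 : 0 < k) (hkp : k < p) :
    ‖(p.choose k : 𝕜)‖ ≤ ‖(p : 𝕜)‖ := by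
  obtain ⟨m, hm⟩ := hp.dvd_choose_self hk0.ne' hkp
  rw [hm, Nat.cast_mul, norm_mul]
  exact mul_le_of_le_one_right (norm_nonneg _) (norm_natCast_le_one 𝕜 m)

theorem norm_pow_sub_pow_sub_sub_pow_le {p : ℕ} (hp : p.Prime) {a b : 𝕜}
    (hab : ‖a - b‖ ≤ ‖b‖) :
    ‖a ^ p - b ^ p - (a - b) ^ p‖ ≤ ‖(p : 𝕜)‖ * ‖b‖ ^ (p - 1) * ‖a - b‖ := by
  rw [pow_sub_pow_sub_sub_pow_eq_sum hp.pos]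
  refine norm_sum_le_of_forall_le_of_nonneg (by positivity) fun k hk ↦ ?_
  obtain ⟨hk0, hkp⟩ := mem_Ioo.mp hk
  calc ‖b ^ k * (a - b) ^ (p - k) * (p.choose k : 𝕜)‖
      = ‖b‖ ^ k * ‖a - b‖ ^ (p - k) * ‖(p.choose k : 𝕜)‖ := by simp only [norm_mul, norm_pow]
    _ ≤ ‖b‖ ^ (p - 1) * ‖a - b‖ * ‖(p : 𝕜)‖ :=
        mul_le_mul (pow_mul_pow_sub_le_pow_pred_mul (norm_nonneg _) hab hkp)
          (norm_choose_le_norm_prime hp hk0 hkp) (norm_nonneg _) (by positivity)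
    _ = ‖(p : 𝕜)‖ * ‖b‖ ^ (p - 1) * ‖a - b‖ := by ring

theorem norm_pow_add_eq_norm_pow {n : ℕ} (hn : 2 ≤ n) {x y : 𝕜} {R : ℝ} (hR : 0 ≤ R)
    (hy : ‖y‖ ≤ R ^ (n - 1) * ‖x‖) (hbig : R ^ n ≤ ‖x ^ n + y‖) :
    ‖x ^ n + y‖ = ‖x‖ ^ n := by
  have hpow : ∀ r : ℝ, r ^ (n - 1) * r = r ^ n := fun r ↦ by
    rw [← pow_succ, Nat.sub_add_cancel (by omega)]
  rcases lt_or_ge R ‖x‖ with hRx | hxR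
  · have hyx : ‖y‖ < ‖x ^ n‖ := by
      calc ‖y‖ ≤ R ^ (n - 1) * ‖x‖ := hy
        _ < ‖x‖ ^ (n - 1) * ‖x‖ := by
            gcongr
            · exact hR.trans_lt hRx
            · omega
        _ = ‖x ^ n‖ := by rw [hpow, norm_pow]
    rw [norm_add_eq_max_of_norm_ne_norm hyx.ne', max_eq_left hyx.le, norm_pow]
  · obtain hxR | rfl := hxR.lt_or_eq
    · have : ‖x ^ n + y‖ < R ^ n := by
        refine (norm_add_le_max _ _).trans_lt (max_lt ?_ ?_)
        · rw [norm_pow]; gcongr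
        · calc ‖y‖ ≤ R ^ (n - 1) * ‖x‖ := hy
            _ < R ^ (n - 1) * R := by
                gcongr; exact pow_pos ((norm_nonneg x).trans_lt hxR) _
            _ = R ^ n := hpow R
      exact absurd hbig this.not_ge
    · refine le_antisymm ((norm_add_le_max _ _).trans (max_le ?_ ?_)) hbig
      · rw [norm_pow]
      · rwa [← hpow]

theorem norm_pow_sub_pow_eq_norm_sub_pow {p : ℕ} (hp : p.Prime) {ρ : ℝ} (hρ0 : 0 ≤ ρ)
    (hρ : ρ ^ (p - 1) = ‖(p : 𝕜)‖) {a b : 𝕜} (hab : ‖a - b‖ ≤ ‖b‖)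
    (hbig : (ρ * ‖b‖) ^ p ≤ ‖a ^ p - b ^ p‖) :
    ‖a ^ p - b ^ p‖ = ‖a - b‖ ^ p := by
  have herr := norm_pow_sub_pow_sub_sub_pow_le hp hab
  rw [← hρ, ← mul_pow] at herr
  rw [show a ^ p - b ^ p = (a - b) ^ p + (a ^ p - b ^ p - (a - b) ^ p) by ring] at hbig ⊢
  exact norm_pow_add_eq_norm_pow hp.two_le (by positivity) herr hbig

theorem norm_pow_prime_pow_sub_pow_eq {p : ℕ} (hp : p.Prime) {ρ : ℝ} (hρ0 : 0 ≤ ρ)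
    (hρ : ρ ^ (p - 1) = ‖(p : 𝕜)‖) {a b : 𝕜} (hab : ‖a‖ ≤ ‖b‖) (e : ℕ)
    (hbig : ρ ^ p * ‖b‖ ^ p ^ e ≤ ‖a ^ p ^ e - b ^ p ^ e‖) :
    ‖a ^ p ^ e - b ^ p ^ e‖ = ‖a - b‖ ^ p ^ e := by
  have hρ1 : ρ ≤ 1 :=
    (pow_le_one_iff_of_nonneg hρ0 (by have := hp.two_le; omega)).mp
      (hρ ▸ norm_natCast_le_one 𝕜 p)
  induction e with
  | zero => simp
  | succ e ih =>
    have hpow : ∀ x : 𝕜, x ^ p ^ (e + 1) = (x ^ p ^ e) ^ p := fun x ↦ by rw [← pow_mul, pow_succ]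
    have hnorm : ‖b‖ ^ p ^ (e + 1) = ‖b ^ p ^ e‖ ^ p := by rw [norm_pow, ← pow_mul, pow_succ]
    rw [hpow, hpow, hnorm, ← mul_pow] at hbig
    have hab' : ‖a ^ p ^ e - b ^ p ^ e‖ ≤ ‖b ^ p ^ e‖ :=
      norm_sub_le_of_norm_le (by rw [norm_pow, norm_pow]; gcongr)
    have hstep := norm_pow_sub_pow_eq_norm_sub_pow hp hρ0 hρ hab' hbig
    have hlow : ρ * ‖b‖ ^ p ^ e ≤ ‖a ^ p ^ e - b ^ p ^ e‖ := by
      rw [← norm_pow, ← pow_le_pow_iff_left₀ (by positivity) (norm_nonneg _) hp.ne_zero, ← hstep]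
      exact hbig
    rw [hpow, hpow, hstep, ih ?_, ← pow_mul, ← pow_succ]
    calc ρ ^ p * ‖b‖ ^ p ^ e ≤ ρ * ‖b‖ ^ p ^ e := by
          gcongr; exact pow_le_of_le_one hρ0 hρ1 hp.ne_zero
      _ ≤ _ := hlow

end Ultrametric

theorem stmt2_general (p e : ℕ) (hp : p.Prime) (d : ℕ) (hd : d = p ^ e)
    (𝕜 : Type*) [NormedField 𝕜] [IsUltrametricDist 𝕜]
    (a b c₀ : 𝕜) (f : 𝕜 → 𝕜) (hf : ∀ z, f z = z ^ d + c₀)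
    (hab : ‖a‖ = ‖b‖)
    (hbig : ‖f a - f b‖ ≥ ‖(p : 𝕜)‖ ^ ((p : ℝ) / ((p : ℝ) - 1)) * ‖b‖ ^ d) :
    ‖f a - f b‖ = ‖a - b‖ ^ d := by
  set ρ : ℝ := ‖(p : 𝕜)‖ ^ (((p - 1 : ℕ) : ℝ)⁻¹)
  have hρ0 : 0 ≤ ρ := by positivity
  have hρ : ρ ^ (p - 1) = ‖(p : 𝕜)‖ :=
    Real.rpow_inv_natCast_pow (norm_nonneg _) (by have := hp.two_le; omega)
  have hρp : ‖(p : 𝕜)‖ ^ ((p : ℝ) / ((p : ℝ) - 1)) = ρ ^ p := by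
    rw [← Real.rpow_natCast ρ, ← Real.rpow_mul (norm_nonneg _), Nat.cast_sub hp.one_le,
      Nat.cast_one, inv_mul_eq_div]
  have hfab : f a - f b = a ^ d - b ^ d := by rw [hf, hf]; ring
  subst hd
  rw [hfab] at hbig ⊢
  rw [hρp] at hbig
  exact norm_pow_prime_pow_sub_pow_eq hp hρ0 hρ hab.le e hbig

/-- In a nonarchimedean field (such as ℂ_p) with |p| = 1/p, for
f(z) = z^d + c₀ with d = p^e, if |a| = |b| > 0 and
|f(a) − f(b)| ≥ |p|^{p/(p−1)} |b|^d, then |f(a) − f(b)| = |a − b|^d. -/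
theorem stmt2 (p e : ℕ) (hp : p.Prime) (he : 1 ≤ e) (d : ℕ) (hd : d = p ^ e)
    (𝕜 : Type*) [NormedField 𝕜] [IsUltrametricDist 𝕜]
    (hpnorm : ‖(p : 𝕜)‖ = (p : ℝ)⁻¹)
    (a b c₀ : 𝕜) (f : 𝕜 → 𝕜) (hf : ∀ z, f z = z ^ d + c₀)
    (hab : ‖a‖ = ‖b‖) (hbpos : 0 < ‖b‖)
    (hbig : ‖f a - f b‖ ≥ ‖(p : 𝕜)‖ ^ ((p : ℝ) / ((p : ℝ) - 1)) * ‖b‖ ^ d) :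
    ‖f a - f b‖ = ‖a - b‖ ^ d :=
  stmt2_general p e hp d hd 𝕜 a b c₀ f hf hab hbig
end

section
/- Let d ≥ 2, define a_i ∈ ℤ[c] by a_0 = 0 and a_{i+1} = a_i^d + c. Let c₀ ∈ ℚ̄ be such that f(z) = z^d + c₀ is postcritically finite of exact type (m, n) with m ≥ 1 (i.e., f^{m+n}(0) = f^m(0), m is minimal nonnegative with f^m(0) periodic and m ≥ 1, and n is the exact period of f^m(0)). Let K = ℚ(c₀) and let v be a finite place of K. Then either v(a_i(c₀)) = 0 for all i ≥ 1, or v(a_n(c₀)) > 0 and, for all i ≥ 1, v(a_i(c₀)) = v(a_n(c₀)) if n divides i and v(a_i(c₀)) = 0 otherwise. -/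
open NumberField IsDedekindDomain Function Finset

/-!
Work with the critical orbit `a i = f^[i] 0` of `f z = z ^ d + c` modulo the prime `𝔭` of `v`.
Since `x - y` divides `f x - f y`, `a (i + j) - a i` is divisible by `a j`; hence the orbit is
periodic modulo `𝔭` with period the least `s > 0` such that `𝔭 ∣ a s`, and `𝔭 ∣ a i` exactly when
`s ∣ i`. On the residue class of `0` the map `f` is a strict contraction, because
`f x - f y = (x - y) ∑ xⁱ yᵈ⁻¹⁻ⁱ` and the sum lies in `𝔭`; so two periodic points in that class
coincide. Applied to `a (s m)` and `a (s m + s)`, both on the cycle, this forces `s = n`.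
Finally `a n ^ d` divides `a (i + n) - a i` for `i ≥ 1`, which fixes `v (a (k n)) = v (a n)`.
-/

def unicritical {R : Type*} [CommRing R] (d : ℕ) (c : R) (z : R) : R := z ^ d + c

theorem unicritical_sub {R : Type*} [CommRing R] (d : ℕ) (c x y : R) :
    unicritical d c x - unicritical d c y = x ^ d - y ^ d :=
  add_sub_add_right_eq_sub _ _ _

theorem Function.minimalPeriod_eq_of_forall_iterate_ne {α : Type*} {f : α → α} {x : α} {n : ℕ}
    (hn : 0 < n) (hx : IsPeriodicPt f n x) (hmin : ∀ k, 0 < k → k < n → f^[k] x ≠ x) :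
    minimalPeriod f x = n :=
  (hx.minimalPeriod_le hn).antisymm <| not_lt.1 fun hlt =>
    hmin _ (hx.minimalPeriod_pos hn) hlt iterate_minimalPeriod

namespace Valuation

variable {R Γ₀ : Type*} [CommRing R] [LinearOrderedCommGroupWithZero Γ₀] (v : Valuation R Γ₀)

theorem map_le_of_dvd (hv : ∀ x, v x ≤ 1) {x y : R} (h : x ∣ y) : v y ≤ v x := by
  obtain ⟨z, rfl⟩ := h
  rw [v.map_mul]
  exact mul_le_of_le_one_right' (hv z)

theorem lt_one_of_map_sub_lt_one {x y : R} (hx : v x < 1) (hxy : v (x - y) < 1) : v y < 1 := by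
  simpa using v.map_sub_lt hx hxy

theorem map_lt_one_iff_of_map_sub_lt_one {x y : R} (h : v (x - y) < 1) : v x < 1 ↔ v y < 1 :=
  ⟨fun hx => v.lt_one_of_map_sub_lt_one hx h,
    fun hy => v.lt_one_of_map_sub_lt_one hy (v.map_sub_swap x y ▸ h)⟩

theorem map_eq_of_map_sub_le_pow {x y : R} {d : ℕ} (hd : 2 ≤ d) (hy : v y < 1)
    (h : v (x - y) ≤ v y ^ d) : v x = v y := by
  rcases eq_or_ne (v y) 0 with h0 | h0
  · have hxy : v (x - y) = 0 := le_antisymm (by simpa [h0, zero_pow (by omega : d ≠ 0)] using h)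
      zero_le
    have hx : v x ≤ 0 := by simpa [hxy, h0] using v.map_add (x - y) y
    rw [h0, le_antisymm hx zero_le]
  · exact v.map_eq_of_sub_lt (h.trans_lt (pow_lt_self_of_lt_one₀ (zero_lt_iff.2 h0) hy hd))

theorem map_geom_sum₂_lt_one (hv : ∀ x, v x ≤ 1) {x y : R} (hx : v x < 1) (hy : v y < 1)
    {d : ℕ} (hd : d ≠ 1) : v (∑ i ∈ range d, x ^ i * y ^ (d - 1 - i)) < 1 := by
  refine v.map_sum_lt one_ne_zero fun i hi => ?_
  rw [v.map_mul, v.map_pow, v.map_pow]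
  rcases Nat.eq_zero_or_pos i with rfl | hi0
  · rw [pow_zero, one_mul]
    exact pow_lt_one₀ zero_le hy (by grind)
  · exact mul_lt_one_of_lt_of_le (pow_lt_one₀ zero_le hx hi0.ne') (pow_le_one₀ zero_le (hv y))

section Unicritical

variable (hv : ∀ x, v x ≤ 1) {d : ℕ} {c : R}
include hv

theorem map_iterate_unicritical_sub_le (k : ℕ) (x y : R) :
    v ((unicritical d c)^[k] x - (unicritical d c)^[k] y) ≤ v (x - y) := by
  induction k generalizing x y with
  | zero => rfl
  | succ k ih =>
    rw [iterate_succ_apply, iterate_succ_apply]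
    refine (ih _ _).trans (v.map_le_of_dvd hv ?_)
    rw [unicritical_sub]
    exact sub_dvd_pow_sub_pow x y d

theorem map_unicritical_orbit_add_sub_le (i j : ℕ) :
    v ((unicritical d c)^[i + j] 0 - (unicritical d c)^[i] 0) ≤ v ((unicritical d c)^[j] 0) := by
  simpa [iterate_add_apply] using v.map_iterate_unicritical_sub_le hv i ((unicritical d c)^[j] 0) 0

theorem map_unicritical_orbit_add_sub_le_pow (hd : d ≠ 0) {i : ℕ} (hi : i ≠ 0) (j : ℕ) :
    v ((unicritical d c)^[i + j] 0 - (unicritical d c)^[i] 0) ≤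
      v ((unicritical d c)^[j] 0) ^ d := by
  obtain ⟨i, rfl⟩ := Nat.exists_eq_succ_of_ne_zero hi
  simp only [Nat.succ_eq_add_one, add_assoc, iterate_add_apply, iterate_one]
  refine (v.map_iterate_unicritical_sub_le hv i _ _).trans_eq ?_
  rw [unicritical_sub, zero_pow hd, sub_zero, v.map_pow]

theorem map_unicritical_orbit_lt_one_iff_dvd {s : ℕ} (hs : 0 < s)
    (has : v ((unicritical d c)^[s] 0) < 1)
    (hmin : ∀ i, 0 < i → i < s → ¬ v ((unicritical d c)^[i] 0) < 1) (i : ℕ) :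
    v ((unicritical d c)^[i] 0) < 1 ↔ s ∣ i := by
  induction i using Nat.strong_induction_on with
  | _ i ih =>
    rcases lt_or_ge i s with his | hsi
    · rcases Nat.eq_zero_or_pos i with rfl | hi0
      · simp
      · exact iff_of_false (hmin i hi0 his) (Nat.not_dvd_of_pos_of_lt hi0 his)
    · obtain ⟨j, rfl⟩ := Nat.exists_eq_add_of_le' hsi
      rw [v.map_lt_one_iff_of_map_sub_lt_one
          ((v.map_unicritical_orbit_add_sub_le hv j s).trans_lt has),
        ih j (by omega), Nat.dvd_add_self_right]

theorem map_unicritical_orbit_mul (hd : 2 ≤ d) {j : ℕ} (hj : v ((unicritical d c)^[j] 0) < 1)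
    {k : ℕ} (hk : 0 < k) : v ((unicritical d c)^[k * j] 0) = v ((unicritical d c)^[j] 0) := by
  rcases Nat.eq_zero_or_pos j with rfl | hj0
  · simp
  induction k, hk using Nat.le_induction with
  | base => simp
  | succ k hk ih =>
    rw [← ih, add_one_mul]
    refine v.map_eq_of_map_sub_le_pow hd (ih ▸ hj) ?_
    rw [ih]
    exact v.map_unicritical_orbit_add_sub_le_pow hv (by omega) (by positivity) j

theorem map_sub_eq_zero_of_isPeriodicPt_unicritical (hd : d ≠ 1) {x y : R} (hx : v x < 1)
    (hy : v y < 1) {n : ℕ} (hn : 0 < n) (hxn : IsPeriodicPt (unicritical d c) n x)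
    (hyn : IsPeriodicPt (unicritical d c) n y) : v (x - y) = 0 := by
  set t := ∑ i ∈ range d, x ^ i * y ^ (d - 1 - i)
  have hstep : v (unicritical d c x - unicritical d c y) = v t * v (x - y) := by
    rw [unicritical_sub, ← geom_sum₂_mul, v.map_mul]
  obtain ⟨n, rfl⟩ := Nat.exists_eq_add_of_lt hn
  have hle : v (x - y) ≤ v t * v (x - y) := by
    rw [← hstep]
    conv_lhs => rw [← hxn.eq, ← hyn.eq]
    simpa only [zero_add, iterate_succ_apply] using v.map_iterate_unicritical_sub_le hv n _ _
  by_contra h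
  exact hle.not_gt
    (mul_lt_of_lt_one_left (zero_lt_iff.2 h) (v.map_geom_sum₂_lt_one hv hx hy hd))

theorem minimalPeriod_unicritical_eq_of_lt_one_iff_dvd (hv0 : ∀ z, v z = 0 → z = 0) (hd : d ≠ 1)
    {s : ℕ} (hs : 0 < s) (hres : ∀ i, v ((unicritical d c)^[i] 0) < 1 ↔ s ∣ i) {m : ℕ}
    (hm : (unicritical d c)^[m] 0 ∈ periodicPts (unicritical d c)) :
    minimalPeriod (unicritical d c) ((unicritical d c)^[m] 0) = s := by
  set f := unicritical d c
  set y := f^[s * m] 0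
  have hyp : minimalPeriod f y = minimalPeriod f (f^[m] 0) := by
    rw [← minimalPeriod_apply_iterate hm (s * m - m), ← iterate_add_apply,
      Nat.sub_add_cancel (Nat.le_mul_of_pos_left m hs)]
  have hp : 0 < minimalPeriod f y := hyp ▸ minimalPeriod_pos_of_mem_periodicPts hm
  have hy : v y < 1 := (hres _).2 (dvd_mul_right s m)
  have hfy : v (f^[s] y) < 1 := by
    rw [← iterate_add_apply]
    exact (hres _).2 (dvd_add dvd_rfl (dvd_mul_right s m))
  have hys : IsPeriodicPt f s y := sub_eq_zero.1 <| hv0 _ <|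
    v.map_sub_eq_zero_of_isPeriodicPt_unicritical hv hd hfy hy hp
      ((isPeriodicPt_minimalPeriod f y).apply_iterate s) (isPeriodicPt_minimalPeriod f y)
  have hpy : v (f^[minimalPeriod f y + s * m] 0) < 1 := by
    rwa [iterate_add_apply, iterate_minimalPeriod]
  rw [← hyp]
  exact Nat.dvd_antisymm hys.minimalPeriod_dvd
    ((Nat.dvd_add_left (dvd_mul_right s m)).1 ((hres _).1 hpy))

end Unicritical

end Valuation

theorem stmt7_general (d : ℕ) (hd : 2 ≤ d) (K : Type*) [Field K] [NumberField K]
    (c₀ : 𝓞 K)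
    (a : ℕ → 𝓞 K) (ha0 : a 0 = 0) (haS : ∀ i, a (i + 1) = a i ^ d + c₀)
    (m n : ℕ) (hn : 1 ≤ n)
    (hper : a (m + n) = a m)
    (hnmin : ∀ k, 0 < k → k < n → a (m + k) ≠ a m)
    (v : HeightOneSpectrum (𝓞 K)) :
    (∀ i, 1 ≤ i → v.intValuation (a i) = 1) ∨
    (v.intValuation (a n) < 1 ∧ ∀ i, 1 ≤ i →
      (n ∣ i → v.intValuation (a i) = v.intValuation (a n)) ∧
      (¬ n ∣ i → v.intValuation (a i) = 1)) := by
  set f := unicritical d c₀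
  have ha : a = fun i => f^[i] 0 := by
    funext i
    induction i with
    | zero => exact ha0
    | succ i ih => rw [haS, ih, iterate_succ_apply']; rfl
  subst ha
  set w := v.intValuation
  have hw : ∀ x, w x ≤ 1 := v.intValuation_le_one
  by_cases hA : ∀ i, 1 ≤ i → w (f^[i] 0) = 1
  · exact Or.inl hA
  right
  have hex : ∃ s, 0 < s ∧ w (f^[s] 0) < 1 := by
    obtain ⟨i, hi, hne⟩ := not_forall₂.1 hA
    exact ⟨i, hi, (hw _).lt_of_ne hne⟩
  obtain ⟨hs, hws⟩ := Nat.find_spec hex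
  have hres := w.map_unicritical_orbit_lt_one_iff_dvd hw hs hws
    fun i hi his h => Nat.find_min hex his ⟨hi, h⟩
  have hperiod : IsPeriodicPt f n (f^[m] 0) := by
    rwa [IsPeriodicPt, IsFixedPt, ← iterate_add_apply, add_comm]
  have hsn : Nat.find hex = n := by
    rw [← minimalPeriod_eq_of_forall_iterate_ne hn hperiod fun k hk hkn => by
      rw [← iterate_add_apply, add_comm]; exact hnmin k hk hkn]
    exact (w.minimalPeriod_unicritical_eq_of_lt_one_iff_dvd hw
      (fun z hz => by_contra (v.intValuation_ne_zero z · hz)) (by omega) hs hres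
      (mk_mem_periodicPts hn hperiod)).symm
  rw [hsn] at hws hres
  refine ⟨hws, fun i hi => ⟨?_, fun h => (hw _).antisymm (not_lt.1 ((hres i).not.2 h))⟩⟩
  rintro ⟨k, rfl⟩
  rw [mul_comm]
  exact w.map_unicritical_orbit_mul hw hd hws (Nat.pos_of_ne_zero (by rintro rfl; simp at hi))

/-- If f(z) = z^d + c₀ is PCF of exact type (m,n) with m ≥ 1,
K = ℚ(c₀), and v is a finite place of K, then either v(a_i) = 0 for all i ≥ 1,
or v(a_n) > 0 and v(a_i) = v(a_n) when n ∣ i, v(a_i) = 0 otherwise.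
(Valuations are written multiplicatively: v(x) = 0 ⟺ intValuation x = 1,
v(x) > 0 ⟺ intValuation x < 1.) -/
theorem stmt7 (d : ℕ) (hd : 2 ≤ d) (K : Type*) [Field K] [NumberField K]
    (c₀ : 𝓞 K) (hK : Algebra.adjoin ℚ {algebraMap (𝓞 K) K c₀} = ⊤)
    (a : ℕ → 𝓞 K) (ha0 : a 0 = 0) (haS : ∀ i, a (i + 1) = a i ^ d + c₀)
    (m n : ℕ) (hm : 1 ≤ m) (hn : 1 ≤ n)
    (hper : a (m + n) = a m)
    (hnmin : ∀ k, 0 < k → k < n → a (m + k) ≠ a m)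
    (hmmin : ∀ m', m' < m → ∀ k, 0 < k → a (m' + k) ≠ a m')
    (v : HeightOneSpectrum (𝓞 K)) :
    (∀ i, 1 ≤ i → v.intValuation (a i) = 1) ∨
    (v.intValuation (a n) < 1 ∧ ∀ i, 1 ≤ i →
      (n ∣ i → v.intValuation (a i) = v.intValuation (a n)) ∧
      (¬ n ∣ i → v.intValuation (a i) = 1)) :=
  stmt7_general d hd K c₀ a ha0 haS m n hn hper hnmin v
end

section
/- Let p be a prime, e ≥ 1, d = p^e, and let c₀ ∈ ℂ_p be such that f(z) = z^d + c₀ is PCF of exact type (m, n) with m ≥ 2 and all a_i(c₀) = f^i(0) satisfying |a_i(c₀)|_p ≤ 1. Then for every 0 ≤ i ≤ m − 2, |a_{i+n+1}(c₀) − a_{i+1}(c₀)|_p = |a_{i+n}(c₀) − a_i(c₀)|_p^d. -/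
/-!
Write `q = ‖p‖`, `φ = p^(e-1) (p - 1)` and `t_j = a_{j+n} - a_j`, so that
`t_{j+1} = a_{j+n}^d - a_j^d`. In the binomial expansion of `x^d - y^d` in powers of `x - y`,
`‖C(d, k)‖ ≤ q^(e - v_p(k))`. If `q ‖a_i‖^φ < ‖t_i‖^φ`, the top term `t_i^d` strictly
dominates, which is the claim. Otherwise the expansion gives `‖t_{i+1}‖^(p-1) ≤ q^p`, and since
`‖t_j‖` is nonincreasing the same bound holds for `t_{m-1}`. Now `a_{m-1+n} ≠ a_{m-1}` have the
same `d`-th power, and two distinct `d`-th roots of `y^d` are at distance at least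
`‖y‖ q^(1/(p-1))`; hence `‖a_{m-1}‖ ≤ q`. Since `x ↦ x^d + c` contracts by the factor `q` on
pairs at distance at most `q`, the orbit then shadows itself: `‖a_{j+m-1} - a_j‖ ≤ q^j ‖a_{m-1}‖`.
On the cycle this difference is periodic, hence zero, so `t_{m-1} = a_{2m-2} - a_{m-1}` has norm
at most `q^(m-1) ‖a_{m-1}‖`, contradicting the separation of roots once `m ≥ 3`, which holds
because `a_0 = 0` rules out the second case at `i = 0`.
-/

open Finset

theorem norm_sum_eq_norm_of_forall_lt {M ι : Type*} [SeminormedAddCommGroup M]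
    [IsUltrametricDist M] {s : Finset ι} {f : ι → M} {j : ι} (hj : j ∈ s)
    (h : ∀ i ∈ s, i ≠ j → ‖f i‖ < ‖f j‖) : ‖∑ i ∈ s, f i‖ = ‖f j‖ := by
  classical
  rw [← add_sum_erase s f hj]
  rcases (s.erase j).eq_empty_or_nonempty with hempty | hne
  · simp [hempty]
  obtain ⟨i, hi, hle⟩ := IsUltrametricDist.exists_norm_finsetSum_le_of_nonempty hne f
  have hlt : ‖∑ k ∈ s.erase j, f k‖ < ‖f j‖ :=
    hle.trans_lt (h i (mem_of_mem_erase hi) (ne_of_mem_erase hi))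
  rw [IsUltrametricDist.norm_add_eq_max_of_norm_ne_norm hlt.ne', max_eq_left hlt.le]

theorem Nat.factorization_mul_sub_one_le (p : ℕ) {k : ℕ} (hk : k ≠ 0) :
    k.factorization p * (p - 1) ≤ k - 1 := by
  rcases Nat.eq_zero_or_pos p with rfl | hp
  · simp
  have hbern := one_add_le_pow_of_two_add_nonneg (a := p - 1) (Nat.zero_le _) (k.factorization p)
  rw [Nat.cast_id, add_tsub_cancel_of_le hp] at hbern
  have := Nat.ordProj_le p hk
  omega

theorem Nat.pow_le_pow_add_mul {p : ℕ} (hp : 1 ≤ p) (e : ℕ) :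
    ∀ g v, v + g ≤ e + 1 → p ^ (v + g) ≤ p ^ v + g * (p ^ e * (p - 1))
  | 0, _, _ => by simp
  | g + 1, v, h => by
    have ih := Nat.pow_le_pow_add_mul hp e g v (by omega)
    have hstep : p ^ (v + g) * (p - 1) ≤ p ^ e * (p - 1) :=
      Nat.mul_le_mul_right _ (Nat.pow_le_pow_right hp (by omega))
    have hsucc : p ^ (v + (g + 1)) = p ^ (v + g) + p ^ (v + g) * (p - 1) := by
      rw [← add_assoc, pow_succ, Nat.mul_sub_one]
      have := Nat.le_mul_of_pos_right (p ^ (v + g)) hp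
      omega
    rw [hsucc, add_one_mul]
    omega

theorem Nat.pow_succ_sub_le_mul {p : ℕ} (hp : 1 ≤ p) {e k : ℕ} (hk0 : k ≠ 0)
    (hk : k ≤ p ^ (e + 1)) :
    p ^ (e + 1) - k ≤ (e + 1 - k.factorization p) * (p ^ e * (p - 1)) := by
  have hv : k.factorization p ≤ e + 1 := Nat.factorization_le_of_le_pow hk
  have hord := Nat.ordProj_le p hk0
  have := Nat.pow_le_pow_add_mul hp e (e + 1 - k.factorization p) (k.factorization p) (by omega)
  rw [Nat.add_sub_cancel' hv] at this
  omega

theorem pow_sub_pow_eq_sum_choose {R : Type*} [CommRing R] (x y : R) (d : ℕ) :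
    x ^ d - y ^ d = ∑ k ∈ Ico 1 (d + 1), (x - y) ^ k * y ^ (d - k) * (d.choose k : R) := by
  rw [← sub_add_cancel x y, add_pow, range_eq_Ico, sum_eq_sum_Ico_succ_bot d.succ_pos]
  simp

theorem norm_sub_le_one {M : Type*} [SeminormedAddCommGroup M] [IsUltrametricDist M] {x y : M}
    (hx : ‖x‖ ≤ 1) (hy : ‖y‖ ≤ 1) : ‖x - y‖ ≤ 1 := by
  rw [sub_eq_add_neg]
  exact (IsUltrametricDist.norm_add_le_max x (-y)).trans (by simpa using ⟨hx, hy⟩)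

section Binomial

variable {𝕜 : Type*} [NormedField 𝕜] [IsUltrametricDist 𝕜]

theorem norm_choose_prime_pow_le {p : ℕ} (hp : p.Prime) {n k : ℕ} (hk0 : k ≠ 0)
    (hk : k ≤ p ^ n) : ‖((p ^ n).choose k : 𝕜)‖ ≤ ‖(p : 𝕜)‖ ^ (n - k.factorization p) := by
  obtain ⟨u, hu⟩ := Nat.ordProj_dvd ((p ^ n).choose k) p
  rw [Nat.factorization_choose_prime_pow hp hk hk0] at hu
  rw [hu, Nat.cast_mul, Nat.cast_pow, norm_mul, norm_pow]
  exact mul_le_of_le_one_right (by positivity) (IsUltrametricDist.norm_natCast_le_one 𝕜 u)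

theorem norm_binomial_term_le {p : ℕ} (hp : p.Prime) (x y : 𝕜) {n k : ℕ} (hk0 : k ≠ 0)
    (hk : k ≤ p ^ n) :
    ‖(x - y) ^ k * y ^ (p ^ n - k) * ((p ^ n).choose k : 𝕜)‖ ≤
      ‖x - y‖ ^ k * ‖y‖ ^ (p ^ n - k) * ‖(p : 𝕜)‖ ^ (n - k.factorization p) := by
  rw [norm_mul, norm_mul, norm_pow, norm_pow]
  gcongr
  exact norm_choose_prime_pow_le hp hk0 hk

theorem norm_pow_sub_pow_le_max_mul {p : ℕ} (hp : p.Prime) {x y : 𝕜} (hx : ‖x‖ ≤ 1)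
    (hy : ‖y‖ ≤ 1) {n : ℕ} (hn : n ≠ 0) :
    ‖x ^ p ^ n - y ^ p ^ n‖ ≤ max ‖(p : 𝕜)‖ ‖x - y‖ * ‖x - y‖ := by
  have hq : ‖(p : 𝕜)‖ ≤ 1 := IsUltrametricDist.norm_natCast_le_one 𝕜 p
  have hxy : ‖x - y‖ ≤ 1 := norm_sub_le_one hx hy
  rw [pow_sub_pow_eq_sum_choose]
  refine IsUltrametricDist.norm_sum_le_of_forall_le_of_nonneg (by positivity) fun k hk => ?_
  rw [mem_Ico] at hk
  refine (norm_binomial_term_le hp x y (by omega) (by omega)).trans ?_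
  have hY : ‖y‖ ^ (p ^ n - k) ≤ 1 := pow_le_one₀ (norm_nonneg _) hy
  rcases eq_or_lt_of_le hk.1 with rfl | hk2
  · calc ‖x - y‖ ^ 1 * ‖y‖ ^ (p ^ n - 1) * ‖(p : 𝕜)‖ ^ (n - (1).factorization p)
        ≤ ‖x - y‖ * 1 * ‖(p : 𝕜)‖ := by
          rw [pow_one, Nat.factorization_one, Finsupp.zero_apply, Nat.sub_zero]
          gcongr
          exact pow_le_of_le_one (norm_nonneg _) hq hn
      _ ≤ max ‖(p : 𝕜)‖ ‖x - y‖ * ‖x - y‖ := by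
          rw [mul_one, mul_comm]
          gcongr
          exact le_max_left _ _
  · calc ‖x - y‖ ^ k * ‖y‖ ^ (p ^ n - k) * ‖(p : 𝕜)‖ ^ (n - k.factorization p)
        ≤ ‖x - y‖ ^ k * 1 * 1 := by
          gcongr
          exact pow_le_one₀ (norm_nonneg _) hq
      _ ≤ ‖x - y‖ * ‖x - y‖ := by
          rw [mul_one, mul_one, ← sq]
          exact pow_le_pow_of_le_one (norm_nonneg _) hxy hk2
      _ ≤ max ‖(p : 𝕜)‖ ‖x - y‖ * ‖x - y‖ := by
          gcongr
          exact le_max_right _ _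

theorem norm_pow_sub_pow_eq_of_lt {p : ℕ} (hp : p.Prime) {x y : 𝕜} (n : ℕ)
    (h : ‖(p : 𝕜)‖ * ‖y‖ ^ (p ^ n * (p - 1)) < ‖x - y‖ ^ (p ^ n * (p - 1))) :
    ‖x ^ p ^ (n + 1) - y ^ p ^ (n + 1)‖ = ‖x - y‖ ^ p ^ (n + 1) := by
  set P := p ^ n * (p - 1)
  set d := p ^ (n + 1)
  set q := ‖(p : 𝕜)‖
  set T := ‖x - y‖
  have hP : P ≠ 0 := Nat.mul_ne_zero (pow_ne_zero _ hp.ne_zero) (by have := hp.two_le; omega)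
  have hq : q ≤ 1 := IsUltrametricDist.norm_natCast_le_one 𝕜 p
  have hT : 0 < T := lt_of_pow_lt_pow_left₀ P (norm_nonneg _)
    (by rw [zero_pow hP]; exact (by positivity : 0 ≤ q * ‖y‖ ^ P).trans_lt h)
  have hd : 1 ≤ d := Nat.one_le_pow _ _ hp.pos
  rw [pow_sub_pow_eq_sum_choose, norm_sum_eq_norm_of_forall_lt (j := d) (by simp [hd])]
  · simp [T]
  intro k hk hkd
  rw [mem_Ico] at hk
  have hkd' : k < d := by omega
  have htop : ‖(x - y) ^ d * y ^ (d - d) * (d.choose d : 𝕜)‖ = T ^ d := by simp [T]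
  rw [htop]
  refine (norm_binomial_term_le hp x y (by omega) hkd'.le).trans_lt ?_
  have hexp : d - k ≤ (n + 1 - k.factorization p) * P :=
    Nat.pow_succ_sub_le_mul hp.one_lt.le (by omega) hkd'.le
  have hsmall : ‖y‖ ^ (d - k) * q ^ (n + 1 - k.factorization p) < T ^ (d - k) := by
    refine lt_of_pow_lt_pow_left₀ P (by positivity) ?_
    calc (‖y‖ ^ (d - k) * q ^ (n + 1 - k.factorization p)) ^ P
        = (‖y‖ ^ P) ^ (d - k) * q ^ ((n + 1 - k.factorization p) * P) := by ring
      _ ≤ (‖y‖ ^ P) ^ (d - k) * q ^ (d - k) :=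
          mul_le_mul_of_nonneg_left (pow_le_pow_of_le_one (norm_nonneg _) hq hexp) (by positivity)
      _ = (q * ‖y‖ ^ P) ^ (d - k) := by ring
      _ < (T ^ P) ^ (d - k) := pow_lt_pow_left₀ h (by positivity) (by omega)
      _ = (T ^ (d - k)) ^ P := by ring
  calc T ^ k * ‖y‖ ^ (d - k) * q ^ (n + 1 - k.factorization p)
      = T ^ k * (‖y‖ ^ (d - k) * q ^ (n + 1 - k.factorization p)) := by ring
    _ < T ^ k * T ^ (d - k) := by gcongr
    _ = T ^ d := by rw [← pow_add, Nat.add_sub_cancel' hkd'.le]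

theorem norm_pow_sub_pow_pow_le_of_le {p : ℕ} (hp : p.Prime) {x y : 𝕜} (hy : ‖y‖ ≤ 1) (n : ℕ)
    (h : ‖x - y‖ ^ (p ^ n * (p - 1)) ≤ ‖(p : 𝕜)‖ * ‖y‖ ^ (p ^ n * (p - 1))) :
    ‖x ^ p ^ (n + 1) - y ^ p ^ (n + 1)‖ ^ (p - 1) ≤ ‖(p : 𝕜)‖ ^ p := by
  set P := p ^ n * (p - 1)
  set d := p ^ (n + 1)
  set q := ‖(p : 𝕜)‖
  set T := ‖x - y‖
  set Y := ‖y‖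
  have hP : P ≠ 0 := Nat.mul_ne_zero (pow_ne_zero _ hp.ne_zero) (by have := hp.two_le; omega)
  have hq : q ≤ 1 := IsUltrametricDist.norm_natCast_le_one 𝕜 p
  have hd : 1 ≤ d := Nat.one_le_pow _ _ hp.pos
  rw [pow_sub_pow_eq_sum_choose]
  obtain ⟨k, hk, hle⟩ := IsUltrametricDist.exists_norm_finsetSum_le_of_nonempty
    (nonempty_Ico.2 (by omega : 1 < d + 1)) fun k => (x - y) ^ k * y ^ (d - k) * (d.choose k : 𝕜)
  rw [mem_Ico] at hk
  set v := k.factorization p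
  have hexp : d * (p - 1) ≤ (k + (n + 1 - v) * P) * (p - 1) := by
    have : d - k ≤ (n + 1 - v) * P :=
      Nat.pow_succ_sub_le_mul hp.one_lt.le (by omega) (Nat.lt_succ_iff.1 hk.2)
    exact Nat.mul_le_mul_right _ (by omega)
  refine (pow_le_pow_left₀ (norm_nonneg _)
    (hle.trans (norm_binomial_term_le hp x y (by omega) (by omega))) _).trans ?_
  refine le_of_pow_le_pow_left₀ hP (by positivity) ?_
  calc ((T ^ k * Y ^ (d - k) * q ^ (n + 1 - v)) ^ (p - 1)) ^ P
      = (T ^ P) ^ (k * (p - 1)) * Y ^ ((d - k) * (p - 1) * P) *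
          q ^ ((n + 1 - v) * P * (p - 1)) := by ring
    _ ≤ (q * Y ^ P) ^ (k * (p - 1)) * Y ^ ((d - k) * (p - 1) * P) *
          q ^ ((n + 1 - v) * P * (p - 1)) := by gcongr
    _ = Y ^ (P * (k * (p - 1)) + (d - k) * (p - 1) * P) *
          q ^ ((k + (n + 1 - v) * P) * (p - 1)) := by ring
    _ ≤ 1 * q ^ (d * (p - 1)) :=
        mul_le_mul (pow_le_one₀ (norm_nonneg _) hy) (pow_le_pow_of_le_one (norm_nonneg _) hq hexp)
          (by positivity) zero_le_one
    _ = (q ^ p) ^ P := by rw [one_mul, ← pow_mul]; simp only [d, P]; ring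

theorem le_norm_sub_pow_of_pow_eq_pow {p : ℕ} (hp : p.Prime) {x y : 𝕜} (n : ℕ)
    (hxy : x ^ p ^ n = y ^ p ^ n) (hne : x ≠ y) :
    ‖(p : 𝕜)‖ * ‖y‖ ^ (p - 1) ≤ ‖x - y‖ ^ (p - 1) := by
  -- Otherwise the linear term of the expansion of `x^d - y^d = 0` would dominate all others.
  by_contra! h
  set d := p ^ n
  set q := ‖(p : 𝕜)‖
  set T := ‖x - y‖
  set Y := ‖y‖
  have hp1 : p - 1 ≠ 0 := by have := hp.two_le; omega
  have hd : 1 ≤ d := Nat.one_le_pow _ _ hp.pos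
  have hq1 : q ≤ 1 := IsUltrametricDist.norm_natCast_le_one 𝕜 p
  have hT : 0 < T := norm_pos_iff.2 (sub_ne_zero.2 hne)
  have hqY : 0 < q * Y ^ (p - 1) := (by positivity : 0 ≤ T ^ (p - 1)).trans_lt h
  have hq : 0 < q := pos_of_mul_pos_left hqY (by positivity)
  have hY : 0 < Y := lt_of_pow_lt_pow_left₀ (p - 1) (norm_nonneg _)
    (by rw [zero_pow hp1]; exact pos_of_mul_pos_right hqY hq.le)
  have hlin : ‖x ^ d - y ^ d‖ = T * Y ^ (d - 1) * q ^ n := by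
    have hterm : ‖(x - y) ^ 1 * y ^ (d - 1) * (d.choose 1 : 𝕜)‖ = T * Y ^ (d - 1) * q ^ n := by
      simp [d, T, Y, q]
    rw [pow_sub_pow_eq_sum_choose,
      norm_sum_eq_norm_of_forall_lt (j := 1) (mem_Ico.2 ⟨le_rfl, by omega⟩), hterm]
    intro k hk hk1
    rw [mem_Ico] at hk
    rw [hterm]
    refine (norm_binomial_term_le hp x y (by omega) (by omega)).trans_lt ?_
    set v := k.factorization p
    have hv : v * (p - 1) ≤ k - 1 := Nat.factorization_mul_sub_one_le p (by omega)
    have hvn : v ≤ n := Nat.factorization_le_of_le_pow (by omega)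
    have hsmall : T ^ (k - 1) < q ^ v * Y ^ (k - 1) := by
      refine lt_of_pow_lt_pow_left₀ (p - 1) (by positivity) ?_
      calc (T ^ (k - 1)) ^ (p - 1) = (T ^ (p - 1)) ^ (k - 1) := by ring
        _ < (q * Y ^ (p - 1)) ^ (k - 1) := pow_lt_pow_left₀ h (by positivity) (by omega)
        _ = q ^ (k - 1) * (Y ^ (k - 1)) ^ (p - 1) := by ring
        _ ≤ q ^ (v * (p - 1)) * (Y ^ (k - 1)) ^ (p - 1) :=
            mul_le_mul_of_nonneg_right (pow_le_pow_of_le_one hq.le hq1 hv) (by positivity)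
        _ = (q ^ v * Y ^ (k - 1)) ^ (p - 1) := by ring
    obtain ⟨j, rfl⟩ : ∃ j, k = j + 1 := ⟨k - 1, by omega⟩
    rw [Nat.add_sub_cancel] at hsmall
    calc T ^ (j + 1) * Y ^ (d - (j + 1)) * q ^ (n - v)
        = T ^ j * (T * Y ^ (d - (j + 1)) * q ^ (n - v)) := by ring
      _ < q ^ v * Y ^ j * (T * Y ^ (d - (j + 1)) * q ^ (n - v)) := by gcongr
      _ = T * (Y ^ j * Y ^ (d - (j + 1))) * (q ^ v * q ^ (n - v)) := by ring
      _ = T * Y ^ (d - 1) * q ^ n := by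
          rw [← pow_add, ← pow_add, Nat.add_sub_cancel' hvn,
            show j + (d - (j + 1)) = d - 1 by omega]
  rw [hxy, sub_self, norm_zero] at hlin
  have : 0 < T * Y ^ (d - 1) * q ^ n := by positivity
  linarith

end Binomial

theorem orbit_add_eq_of_le {α : Type*} {g : α → α} {a : ℕ → α} (ha : ∀ i, a (i + 1) = g (a i))
    {m n s : ℕ} (hper : a (m + n) = a m) (hs : m ≤ s) : a (s + n) = a s := by
  obtain ⟨j, rfl⟩ := Nat.exists_eq_add_of_le hs
  induction j with
  | zero => exact hper
  | succ j ih => rw [show m + (j + 1) + n = m + j + n + 1 by omega, ha, ih (by omega), ← ha]; rfl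

theorem orbit_succ_sub_succ {R : Type*} [Ring R] {d : ℕ} {c : R} {a : ℕ → R}
    (haS : ∀ i, a (i + 1) = a i ^ d + c) (j s : ℕ) :
    a (j + 1 + s) - a (j + 1) = a (j + s) ^ d - a j ^ d := by
  rw [show j + 1 + s = j + s + 1 by omega, haS, haS, add_sub_add_right_eq_sub]

section Orbit

variable {𝕜 : Type*} [NormedField 𝕜] [IsUltrametricDist 𝕜] {c : 𝕜} {a : ℕ → 𝕜}

theorem norm_orbit_sub_antitone {p e : ℕ} (hp : p.Prime) (he : e ≠ 0)
    (haS : ∀ i, a (i + 1) = a i ^ p ^ e + c) (hunit : ∀ i, ‖a i‖ ≤ 1) (s j l : ℕ) :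
    ‖a (j + l + s) - a (j + l)‖ ≤ ‖a (j + s) - a j‖ := by
  induction l with
  | zero => rfl
  | succ l ih =>
    refine le_trans ?_ ih
    rw [← add_assoc, orbit_succ_sub_succ haS]
    refine (norm_pow_sub_pow_le_max_mul hp (hunit _) (hunit _) he).trans ?_
    exact mul_le_of_le_one_left (norm_nonneg _) (max_le
      (IsUltrametricDist.norm_natCast_le_one 𝕜 p) (norm_sub_le_one (hunit _) (hunit _)))

theorem norm_orbit_sub_le_pow_mul {p e : ℕ} (hp : p.Prime) (he : e ≠ 0)
    (haS : ∀ i, a (i + 1) = a i ^ p ^ e + c) (hunit : ∀ i, ‖a i‖ ≤ 1) {s j : ℕ}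
    (hj : ‖a (j + s) - a j‖ ≤ ‖(p : 𝕜)‖) (l : ℕ) :
    ‖a (j + l + s) - a (j + l)‖ ≤ ‖(p : 𝕜)‖ ^ l * ‖a (j + s) - a j‖ := by
  induction l with
  | zero => simp
  | succ l ih =>
    have hl := (norm_orbit_sub_antitone hp he haS hunit s j l).trans hj
    rw [← add_assoc, orbit_succ_sub_succ haS]
    calc ‖a (j + l + s) ^ p ^ e - a (j + l) ^ p ^ e‖
        ≤ max ‖(p : 𝕜)‖ ‖a (j + l + s) - a (j + l)‖ * ‖a (j + l + s) - a (j + l)‖ :=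
          norm_pow_sub_pow_le_max_mul hp (hunit _) (hunit _) he
      _ ≤ ‖(p : 𝕜)‖ * (‖(p : 𝕜)‖ ^ l * ‖a (j + s) - a j‖) := by
          rw [max_eq_left hl]
          gcongr
      _ = ‖(p : 𝕜)‖ ^ (l + 1) * ‖a (j + s) - a j‖ := by ring

theorem orbit_add_eq_of_norm_le {p e : ℕ} (hp : p.Prime) (he : e ≠ 0)
    (haS : ∀ i, a (i + 1) = a i ^ p ^ e + c) (hunit : ∀ i, ‖a i‖ ≤ 1) (ha0 : a 0 = 0)
    (hq : ‖(p : 𝕜)‖ < 1) {m n s j : ℕ} (hn : n ≠ 0) (hper : a (m + n) = a m)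
    (hs : ‖a s‖ ≤ ‖(p : 𝕜)‖) (hj : m ≤ j) : a (j + s) = a j := by
  have hclose : ‖a (j + s) - a j‖ ≤ ‖(p : 𝕜)‖ := by
    simpa [ha0] using (norm_orbit_sub_antitone hp he haS hunit s 0 j).trans (by simpa [ha0])
  have hcontr := norm_orbit_sub_le_pow_mul hp he haS hunit hclose n
  have hcycle : ∀ i, m ≤ i → a (i + n) = a i :=
    fun _ => orbit_add_eq_of_le (g := fun z => z ^ p ^ e + c) haS hper
  rw [show j + n + s = j + s + n by omega, hcycle _ (by omega), hcycle _ hj] at hcontr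
  have hqn : ‖(p : 𝕜)‖ ^ n < 1 := pow_lt_one₀ (norm_nonneg _) hq hn
  have hzero : ‖a (j + s) - a j‖ = 0 := by nlinarith [norm_nonneg (a (j + s) - a j)]
  exact sub_eq_zero.1 (norm_eq_zero.1 hzero)

theorem pow_lt_norm_sub_pow_of_preperiodic {p e : ℕ} (hp : p.Prime) (he : e ≠ 0)
    (haS : ∀ i, a (i + 1) = a i ^ p ^ e + c) (hunit : ∀ i, ‖a i‖ ≤ 1) (ha0 : a 0 = 0)
    (hq : ‖(p : 𝕜)‖ < 1) {n s : ℕ} (hs : 2 ≤ s) (hper : a (s + 1 + n) = a (s + 1))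
    (hne : a (s + n) ≠ a s) :
    ‖(p : 𝕜)‖ ^ p < ‖a (s + n) - a s‖ ^ (p - 1) := by
  by_contra! hsmall
  set q := ‖(p : 𝕜)‖
  set t := ‖a (s + n) - a s‖
  have hp1 : p - 1 ≠ 0 := by have := hp.two_le; omega
  have hn : n ≠ 0 := by rintro rfl; exact hne rfl
  have ht : 0 < t := norm_pos_iff.2 (sub_ne_zero.2 hne)
  have hq0 : 0 < q := lt_of_pow_lt_pow_left₀ p (norm_nonneg _)
    (by rw [zero_pow hp.ne_zero]; exact (pow_pos ht _).trans_le hsmall)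
  have hroot : a (s + n) ^ p ^ e = a s ^ p ^ e := by
    rw [show s + 1 + n = s + n + 1 by omega, haS, haS] at hper
    exact add_right_cancel hper
  have hsep := le_norm_sub_pow_of_pow_eq_pow hp e hroot hne
  have has : ‖a s‖ ≤ q := by
    refine le_of_pow_le_pow_left₀ hp1 hq0.le (le_of_mul_le_mul_left ?_ hq0)
    calc q * ‖a s‖ ^ (p - 1) ≤ q ^ p := hsep.trans hsmall
      _ = q * q ^ (p - 1) := by rw [← pow_succ', Nat.sub_add_cancel hp.one_lt.le]
  have hshift : a (s + s) = a (s + n) := by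
    have hcycle : ∀ i, s + 1 ≤ i → a (i + n) = a i :=
      fun _ => orbit_add_eq_of_le (g := fun z => z ^ p ^ e + c) haS hper
    rw [← orbit_add_eq_of_norm_le hp he haS hunit ha0 hq hn hper has (j := s + n) (by omega),
      show s + n + s = s + s + n by omega, hcycle _ (by omega)]
  have hts : t ≤ q ^ s * ‖a s‖ := by
    simpa [ha0, hshift] using norm_orbit_sub_le_pow_mul hp he haS hunit (j := 0) (s := s)
      (by simpa [ha0] using has) s
  have has0 : 0 < ‖a s‖ := pos_of_mul_pos_right (ht.trans_le hts) (by positivity)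
  have hqq : q ≤ q ^ (s * (p - 1)) := by
    refine le_of_mul_le_mul_right ?_ (pow_pos has0 (p - 1))
    calc q * ‖a s‖ ^ (p - 1) ≤ t ^ (p - 1) := hsep
      _ ≤ (q ^ s * ‖a s‖) ^ (p - 1) := by gcongr
      _ = q ^ (s * (p - 1)) * ‖a s‖ ^ (p - 1) := by ring
  have hq2 : q ^ (s * (p - 1)) ≤ q ^ 2 :=
    pow_le_pow_of_le_one hq0.le hq.le (by nlinarith [Nat.one_le_iff_ne_zero.2 hp1])
  nlinarith

end Orbit

theorem stmt10_general (p e : ℕ) (hp : p.Prime) (he : 1 ≤ e) (d : ℕ) (hd : d = p ^ e)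
    (𝕜 : Type*) [NormedField 𝕜] [IsUltrametricDist 𝕜]
    (hpnorm : ‖(p : 𝕜)‖ = (p : ℝ)⁻¹)
    (c₀ : 𝕜) (a : ℕ → 𝕜) (ha0 : a 0 = 0) (haS : ∀ i, a (i + 1) = a i ^ d + c₀)
    (m n : ℕ) (hm : 2 ≤ m) (hn : 1 ≤ n)
    (hper : a (m + n) = a m)
    (hmmin : ∀ m', m' < m → ∀ k, 0 < k → a (m' + k) ≠ a m')
    (hunit : ∀ i, ‖a i‖ ≤ 1) :
    ∀ i ≤ m - 2, ‖a (i + n + 1) - a (i + 1)‖ = ‖a (i + n) - a i‖ ^ d := by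
  intro i hi
  subst hd
  obtain ⟨e, rfl⟩ : ∃ e', e = e' + 1 := ⟨e - 1, by omega⟩
  have hq : ‖(p : 𝕜)‖ < 1 := by
    rw [hpnorm]; exact inv_lt_one_of_one_lt₀ (by exact_mod_cast hp.one_lt)
  have hne : ∀ j < m, a (j + n) ≠ a j := fun j hj => hmmin j hj n hn
  rw [show i + n + 1 = i + 1 + n by omega, orbit_succ_sub_succ haS]
  rcases lt_or_ge (‖(p : 𝕜)‖ * ‖a i‖ ^ (p ^ e * (p - 1))) (‖a (i + n) - a i‖ ^ (p ^ e * (p - 1)))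
    with hgood | hbad
  · exact norm_pow_sub_pow_eq_of_lt hp e hgood
  exfalso
  have hi0 : i ≠ 0 := by
    rintro rfl
    have hP : p ^ e * (p - 1) ≠ 0 :=
      Nat.mul_ne_zero (pow_ne_zero _ hp.ne_zero) (by have := hp.two_le; omega)
    simp only [ha0, norm_zero, zero_pow hP, mul_zero, sub_zero] at hbad
    exact hne 0 (by omega) (by
      rw [ha0]; exact norm_eq_zero.1 ((pow_eq_zero_iff hP).1 (le_antisymm hbad (by positivity))))
  obtain ⟨s, rfl⟩ : ∃ s, m = s + 1 := ⟨m - 1, by omega⟩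
  have hsmall := norm_pow_sub_pow_pow_le_of_le hp (hunit i) e hbad
  rw [← orbit_succ_sub_succ haS] at hsmall
  have hmono := norm_orbit_sub_antitone hp e.succ_ne_zero haS hunit n (i + 1) (s - (i + 1))
  rw [show i + 1 + (s - (i + 1)) = s by omega] at hmono
  exact (pow_lt_norm_sub_pow_of_preperiodic hp e.succ_ne_zero haS hunit ha0 hq (by omega) hper
    (hne s (by omega))).not_ge ((pow_le_pow_left₀ (norm_nonneg _) hmono _).trans hsmall)

/-- In a nonarchimedean field (such as ℂ_p) with |p| = 1/p, let
d = p^e and f(z) = z^d + c₀ be PCF of exact type (m,n) with m ≥ 2, with all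
a_i = f^i(0) in the closed unit disk. Then for 0 ≤ i ≤ m−2,
|a_{i+n+1} − a_{i+1}| = |a_{i+n} − a_i|^d. -/
theorem stmt10 (p e : ℕ) (hp : p.Prime) (he : 1 ≤ e) (d : ℕ) (hd : d = p ^ e)
    (𝕜 : Type*) [NormedField 𝕜] [IsUltrametricDist 𝕜]
    (hpnorm : ‖(p : 𝕜)‖ = (p : ℝ)⁻¹)
    (c₀ : 𝕜) (a : ℕ → 𝕜) (ha0 : a 0 = 0) (haS : ∀ i, a (i + 1) = a i ^ d + c₀)
    (m n : ℕ) (hm : 2 ≤ m) (hn : 1 ≤ n)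
    (hper : a (m + n) = a m)
    (hnmin : ∀ k, 0 < k → k < n → a (m + k) ≠ a m)
    (hmmin : ∀ m', m' < m → ∀ k, 0 < k → a (m' + k) ≠ a m')
    (hunit : ∀ i, ‖a i‖ ≤ 1) :
    ∀ i ≤ m - 2, ‖a (i + n + 1) - a (i + 1)‖ = ‖a (i + n) - a i‖ ^ d :=
  stmt10_general p e hp he d hd 𝕜 hpnorm c₀ a ha0 haS m n hm hn hper hmmin hunit
end

section
/- Let d = p^e be a prime power and c₀ ∈ ℚ̄ a Misiurewicz parameter of exact type (m, n) with m ≥ 2. Set ζ = a_{m+n−1}(c₀)/a_{m−1}(c₀) ≠ 1, a d-th root of unity, and let 0 ≤ r ≤ e−1 be the smallest nonnegative integer with ζ^{p^{r+1}} = 1. Let K = ℚ(c₀). If n does not divide m−1, then for every i ≥ 1: ⟨a_i(c₀)⟩^{p^r(p−1)d^{m−1}} = ⟨p⟩ if n | i, and ⟨a_i(c₀)⟩ = O_K if n ∤ i. -/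
/-!
Put `b j = a (j + n) - a j`. Since `b (j + 1) = a (j + n) ^ d - a j ^ d`, each `b j` divides the
next, and as `d = p ^ e` the binomial theorem gives `b (j + 1) = b j ^ d + b j * p * Y`; as long as
`b (j + 1)` divides `p`, this forces `b (j + 1)` to be associated to `b j ^ d`. The chain runs from
`b 0 = a n` to `b (m - 1) = (ζ - 1) * a (m - 1)`, and `ζ - 1 ∣ p` because `(ζ - 1) ^ φ(p ^ (r + 1))`
is associated to `p`; hence `a n ^ d ^ (m - 1)` is associated to `ζ - 1`, as `a (m - 1)` is a unit.

Indeed `a t` is a unit whenever `n ∤ t`: the differences `a (j + t) - a j` are then nonzero, form a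
divisibility chain and are `n`-periodic from `j = m` on, so consecutive ones are associated, while
the quotient of consecutive ones at `j = m * t` is divisible by `a t`. Finally `a i` and `a n`
divide each other when `n ∣ i`: modulo any `a t` the orbit is purely `t`-periodic, and being
eventually `n`-periodic it returns to `0` at time `n`.
-/

open NumberField

section Algebra

variable {R : Type*} [CommRing R]

theorem sub_mul_dvd_pow_sub_pow {x y z : R} {d : ℕ} (hx : z ∣ x) (hy : z ∣ y) (hd : 2 ≤ d) :
    (x - y) * z ∣ x ^ d - y ^ d := by
  obtain ⟨x, rfl⟩ := hx
  obtain ⟨y, rfl⟩ := hy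
  rw [show (z * x - z * y) * z = z ^ 2 * (x - y) by ring, mul_pow, mul_pow, ← mul_sub]
  exact mul_dvd_mul (pow_dvd_pow z hd) (sub_dvd_pow_sub_pow x y d)

theorem exists_add_pow_prime_pow_sub_pow_eq {p : ℕ} (hp : p.Prime) (e : ℕ) (x y : R) :
    ∃ Y, (x + y) ^ p ^ e - y ^ p ^ e = x ^ p ^ e + x * (p * Y) := by
  obtain ⟨Y, hY⟩ := exists_add_pow_prime_pow_eq hp x y e
  exact ⟨y * Y, by rw [hY]; ring⟩

theorem associated_pow_of_eq_pow_add_of_dvd {β γ p Y : R} {d : ℕ} (hd : d ≠ 0)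
    (hγ : γ = β ^ d + β * (p * Y)) (hγp : γ ∣ p) : Associated (β ^ d) γ := by
  -- With `p = γ * k`, the cofactor `u` of `γ = β * u` satisfies `u * w = β ^ (d - 1)` for some
  -- `w` coprime to `β`, so `w` is a unit.
  obtain ⟨k, hk⟩ := hγp
  set u := β ^ (d - 1) + p * Y
  have hβd : β ^ d = β * β ^ (d - 1) := by rw [← pow_succ', Nat.sub_add_cancel (by omega)]
  have hγu : γ = β * u := by rw [hγ, hβd]; ring
  have hu : u * (1 - β * (k * Y)) = β ^ (d - 1) := by
    linear_combination (Y * k) * hγu + Y * hk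
  have hw : IsUnit (1 - β * (k * Y)) :=
    (IsCoprime.pow_right ⟨1, k * Y, by ring⟩).isUnit_of_dvd' dvd_rfl (Dvd.intro_left u hu)
  have hγw : γ * (1 - β * (k * Y)) = β ^ d := by rw [hβd, hγu, ← hu]; ring
  exact Associated.symm ⟨hw.unit, hγw⟩

theorem associated_pow_pow_of_eq_pow_add {b : ℕ → R} {p : R} {d : ℕ} (hd : d ≠ 0)
    (hstep : ∀ j, ∃ Y, b (j + 1) = b j ^ d + b j * (p * Y)) {μ : ℕ} (hμ : b μ ∣ p) :
    ∀ j ≤ μ, Associated (b 0 ^ d ^ j) (b j) := by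
  have hdvd : ∀ j, b j ∣ b (j + 1) := fun j => by
    obtain ⟨Y, hY⟩ := hstep j
    exact ⟨b j ^ (d - 1) + p * Y, by
      rw [hY, mul_add, ← pow_succ', Nat.sub_add_cancel (Nat.one_le_iff_ne_zero.2 hd)]⟩
  intro j hj
  induction j with
  | zero => simp
  | succ j ih =>
    obtain ⟨Y, hY⟩ := hstep j
    have hp : b (j + 1) ∣ p := (Nat.rel_of_forall_rel_succ_of_le (· ∣ ·) hdvd hj).trans hμ
    rw [pow_succ, pow_mul]
    exact ((ih (by omega)).pow_pow).trans (associated_pow_of_eq_pow_add_of_dvd hd hY hp)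

end Algebra

section Cyclotomic

variable {R : Type*} [CommRing R] [IsDomain R]

theorem IsPrimitiveRoot.associated_sub_one_pow_totient {p k : ℕ} (hp : p.Prime) {ζ : R}
    (hζ : IsPrimitiveRoot ζ (p ^ (k + 1))) :
    Associated ((ζ - 1) ^ (p ^ k * (p - 1))) (p : R) := by
  have : Fact p.Prime := ⟨hp⟩
  have : NeZero (p ^ (k + 1)) := ⟨pow_ne_zero _ hp.ne_zero⟩
  rw [← Polynomial.eval_one_cyclotomic_prime_pow (R := R) k,
    Polynomial.cyclotomic_eq_prod_X_sub_primitiveRoots hζ, Polynomial.eval_prod,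
    ← Nat.totient_prime_pow_succ hp, ← hζ.card_primitiveRoots, ← Finset.prod_const]
  refine Associated.prod _ _ _ fun η hη => ?_
  obtain ⟨i, -, hi, rfl⟩ :=
    hζ.isPrimitiveRoot_iff.mp (isPrimitiveRoot_of_mem_primitiveRoots hη)
  simpa using (hζ.associated_sub_one_pow_sub_one_of_coprime hi).neg_right

end Cyclotomic

section Orbit

variable {R : Type*} [CommRing R] {d : ℕ} {c : R} {a : ℕ → R}

theorem orbit_sub_dvd_orbit_sub_succ (haS : ∀ i, a (i + 1) = a i ^ d + c) (j t : ℕ) :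
    a (j + t) - a j ∣ a (j + 1 + t) - a (j + 1) := by
  rw [add_right_comm, haS, haS, add_sub_add_right_eq_sub]
  exact sub_dvd_pow_sub_pow _ _ _

theorem exists_orbit_sub_succ_eq {p e : ℕ} (hp : p.Prime) (hd : d = p ^ e)
    (haS : ∀ i, a (i + 1) = a i ^ d + c) (j t : ℕ) :
    ∃ Y, a (j + 1 + t) - a (j + 1) =
      (a (j + t) - a j) ^ d + (a (j + t) - a j) * (p * Y) := by
  rw [add_right_comm, haS, haS, add_sub_add_right_eq_sub, hd]
  simpa using exists_add_pow_prime_pow_sub_pow_eq hp e (a (j + t) - a j) (a j)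

variable (ha0 : a 0 = 0) (haS : ∀ i, a (i + 1) = a i ^ d + c)
include ha0 haS

theorem orbit_dvd_orbit_add_sub (t k : ℕ) : a t ∣ a (k + t) - a k := by
  induction k with
  | zero => simp [ha0]
  | succ k ih => exact ih.trans (orbit_sub_dvd_orbit_sub_succ haS k t)

theorem orbit_dvd_orbit_add_mul_sub (t j k : ℕ) : a t ∣ a (j + k * t) - a j := by
  induction k with
  | zero => simp
  | succ k ih =>
    have h := orbit_dvd_orbit_add_sub ha0 haS t (j + k * t)
    rw [show j + (k + 1) * t = j + k * t + t by ring]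
    simpa using dvd_add h ih

theorem orbit_dvd_orbit_mul (t k : ℕ) : a t ∣ a (k * t) := by
  simpa [ha0] using orbit_dvd_orbit_add_mul_sub ha0 haS t 0 k

end Orbit

section Periodic

variable {R : Type*} [CommRing R] {d : ℕ} {c : R} {a : ℕ → R} {m n : ℕ}

theorem orbit_add_eq_of_le_s11 (haS : ∀ i, a (i + 1) = a i ^ d + c) {j t : ℕ}
    (h : a (j + t) = a j) {i : ℕ} (hi : j ≤ i) : a (i + t) = a i := by
  induction i, hi using Nat.le_induction with
  | base => exact h
  | succ i _ ih => rw [add_right_comm, haS, ih, haS]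

theorem orbit_add_mul_eq_of_le (haS : ∀ i, a (i + 1) = a i ^ d + c) {j t : ℕ}
    (h : a (j + t) = a j) {i : ℕ} (hi : j ≤ i) (k : ℕ) : a (i + k * t) = a i := by
  induction k with
  | zero => simp
  | succ k ih =>
    rw [show i + (k + 1) * t = i + k * t + t by ring,
      orbit_add_eq_of_le_s11 haS h (hi.trans (Nat.le_add_right i _)), ih]

theorem orbit_dvd_orbit_of_period (ha0 : a 0 = 0) (haS : ∀ i, a (i + 1) = a i ^ d + c)
    (hper : a (m + n) = a m) {t : ℕ} (ht : 0 < t) : a t ∣ a n := by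
  have hmt : a (n + m * t) = a (m * t) := by
    rw [add_comm]; exact orbit_add_eq_of_le_s11 haS hper (Nat.le_mul_of_pos_right m ht)
  have h := orbit_dvd_orbit_add_mul_sub ha0 haS t n m
  rw [hmt] at h
  simpa using dvd_sub (orbit_dvd_orbit_mul ha0 haS t m) h

theorem associated_orbit_of_dvd [IsDomain R] (ha0 : a 0 = 0) (haS : ∀ i, a (i + 1) = a i ^ d + c)
    (hper : a (m + n) = a m) {i : ℕ} (hi : 0 < i) (hni : n ∣ i) : Associated (a i) (a n) := by
  obtain ⟨k, rfl⟩ := hni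
  refine associated_of_dvd_dvd (orbit_dvd_orbit_of_period ha0 haS hper hi) ?_
  rw [mul_comm]
  exact orbit_dvd_orbit_mul ha0 haS n k

variable (haS : ∀ i, a (i + 1) = a i ^ d + c) (hn : 0 < n) (hper : a (m + n) = a m)
  (hnmin : ∀ k, 0 < k → k < n → a (m + k) ≠ a m)
include haS hn hper hnmin

theorem dvd_of_orbit_add_eq {j t : ℕ} (h : a (j + t) = a j) : n ∣ t := by
  have hj : j ≤ m + j * n := le_add_left (Nat.le_mul_of_pos_right j hn)
  have hmt : a (m + t) = a m := by
    rw [← orbit_add_mul_eq_of_le haS hper le_rfl j, ← orbit_add_eq_of_le_s11 haS h hj,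
      add_right_comm, orbit_add_mul_eq_of_le haS hper (Nat.le_add_right m t)]
  have hmod : a (m + t % n) = a m := by
    rw [← orbit_add_mul_eq_of_le haS hper (Nat.le_add_right m _) (t / n), add_assoc,
      Nat.mod_add_div', hmt]
  by_contra hnt
  exact hnmin _ (Nat.pos_of_ne_zero fun h0 => hnt (Nat.dvd_of_mod_eq_zero h0))
    (Nat.mod_lt t hn) hmod

theorem isUnit_orbit_of_not_dvd [IsDomain R] (ha0 : a 0 = 0) (hd : 2 ≤ d) {t : ℕ}
    (hnt : ¬ n ∣ t) : IsUnit (a t) := by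
  have ht : 0 < t := Nat.pos_of_ne_zero fun h => hnt (h ▸ dvd_zero n)
  set b : ℕ → R := fun j => a (j + t) - a j
  have hb : b (m * t) ≠ 0 := fun h =>
    hnt (dvd_of_orbit_add_eq haS hn hper hnmin (sub_eq_zero.1 h))
  have hstep : b (m * t) * a t ∣ b (m * t + 1) := by
    have hx : a t ∣ a (m * t + t) := by
      simpa [add_one_mul] using orbit_dvd_orbit_mul ha0 haS t (m + 1)
    show (a (m * t + t) - a (m * t)) * a t ∣ a (m * t + 1 + t) - a (m * t + 1)
    rw [add_right_comm, haS, haS, add_sub_add_right_eq_sub]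
    exact sub_mul_dvd_pow_sub_pow hx (orbit_dvd_orbit_mul ha0 haS t m) hd
  have hchain : b (m * t + 1) ∣ b (m * t + n) :=
    Nat.rel_of_forall_rel_succ_of_le (· ∣ ·) (orbit_sub_dvd_orbit_sub_succ haS · t) (by omega)
  have hper' : b (m * t + n) = b (m * t) := by
    have hm : m ≤ m * t := Nat.le_mul_of_pos_right m ht
    simp only [b, add_right_comm _ n t, orbit_add_eq_of_le_s11 haS hper hm,
      orbit_add_eq_of_le_s11 haS hper (hm.trans (Nat.le_add_right _ t))]
  rw [hper'] at hchain
  exact isUnit_of_dvd_one ((mul_dvd_mul_iff_left hb).1 (by simpa using hstep.trans hchain))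

end Periodic

theorem stmt11_general (p e : ℕ) (hp : p.Prime) (he : 1 ≤ e) (d : ℕ) (hd : d = p ^ e)
    (K : Type*) [Field K] (c₀ : 𝓞 K)
    (a : ℕ → 𝓞 K) (ha0 : a 0 = 0) (haS : ∀ i, a (i + 1) = a i ^ d + c₀)
    (m n : ℕ) (hn : 1 ≤ n)
    (hper : a (m + n) = a m)
    (hnmin : ∀ k, 0 < k → k < n → a (m + k) ≠ a m)
    (ζ : 𝓞 K) (hζ : a (m + n - 1) = ζ * a (m - 1))
    (hζ1 : ζ ≠ 1)
    (r : ℕ) (hζr : ζ ^ p ^ (r + 1) = 1)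
    (hrmin : ∀ r', r' < r → ζ ^ p ^ (r' + 1) ≠ 1)
    (hndvd : ¬ n ∣ m - 1) :
    ∀ i, 1 ≤ i →
      (n ∣ i → (Ideal.span {a i}) ^ (p ^ r * (p - 1) * d ^ (m - 1)) =
        Ideal.span {(p : 𝓞 K)}) ∧
      (¬ n ∣ i → Ideal.span {a i} = (⊤ : Ideal (𝓞 K))) := by
  have hd2 : 2 ≤ d := hd ▸ (hp.two_le.trans (Nat.le_self_pow (by omega) p))
  have hunit : ∀ t, ¬ n ∣ t → IsUnit (a t) := fun t =>
    isUnit_orbit_of_not_dvd haS hn hper hnmin ha0 hd2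
  intro i hi
  refine ⟨fun hni => ?_, fun hni => Ideal.span_singleton_eq_top.2 (hunit i hni)⟩
  have hprim : IsPrimitiveRoot ζ (p ^ (r + 1)) := by
    have := Fact.mk hp
    rw [← orderOf_eq_prime_pow ?_ hζr]
    · exact IsPrimitiveRoot.orderOf ζ
    · cases r with
      | zero => simpa using hζ1
      | succ r => exact hrmin r (Nat.lt_succ_self r)
  have hζp := hprim.associated_sub_one_pow_totient hp
  have hm : m ≠ 0 := by rintro rfl; exact hndvd (dvd_zero n)
  have hlast : a (m - 1 + n) - a (m - 1) = (ζ - 1) * a (m - 1) := by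
    rw [show m - 1 + n = m + n - 1 by omega, hζ]; ring
  have hζdvd : a (m - 1 + n) - a (m - 1) ∣ p := by
    rw [hlast, (hunit _ hndvd).mul_right_dvd]
    have hφ : p ^ r * (p - 1) ≠ 0 :=
      Nat.mul_ne_zero (pow_ne_zero _ hp.ne_zero) (Nat.sub_ne_zero_of_lt hp.one_lt)
    exact (dvd_pow_self _ hφ).trans hζp.dvd
  have han : Associated (a n ^ d ^ (m - 1)) (ζ - 1) := by
    have h := associated_pow_pow_of_eq_pow_add (b := fun j => a (j + n) - a j) (by omega)
      (fun j => exists_orbit_sub_succ_eq hp hd haS j n) hζdvd (m - 1) le_rfl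
    simp only [zero_add, ha0, sub_zero, hlast] at h
    exact h.trans (associated_mul_unit_right _ _ (hunit _ hndvd)).symm
  rw [Ideal.span_singleton_pow, Ideal.span_singleton_eq_span_singleton, mul_comm, pow_mul]
  exact ((associated_orbit_of_dvd ha0 haS hper hi hni).pow_pow.trans han).pow_pow.trans hζp

/-- d = p^e, c₀ a Misiurewicz parameter of exact type (m,n),
m ≥ 2, ζ = a_{m+n−1}/a_{m−1} ≠ 1 a d-th root of unity, r minimal with
ζ^{p^{r+1}} = 1. If n ∤ m−1, then for i ≥ 1:
⟨a_i⟩^{p^r(p−1)d^{m−1}} = ⟨p⟩ if n ∣ i, and ⟨a_i⟩ = O_K if n ∤ i. -/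
theorem stmt11 (p e : ℕ) (hp : p.Prime) (he : 1 ≤ e) (d : ℕ) (hd : d = p ^ e)
    (K : Type*) [Field K] [NumberField K]
    (c₀ : 𝓞 K) (hK : Algebra.adjoin ℚ {algebraMap (𝓞 K) K c₀} = ⊤)
    (a : ℕ → 𝓞 K) (ha0 : a 0 = 0) (haS : ∀ i, a (i + 1) = a i ^ d + c₀)
    (m n : ℕ) (hm : 2 ≤ m) (hn : 1 ≤ n)
    (hper : a (m + n) = a m)
    (hnmin : ∀ k, 0 < k → k < n → a (m + k) ≠ a m)
    (hmmin : ∀ m', m' < m → ∀ k, 0 < k → a (m' + k) ≠ a m')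
    (ζ : 𝓞 K) (hζ : a (m + n - 1) = ζ * a (m - 1)) (hζd : ζ ^ d = 1)
    (hζ1 : ζ ≠ 1)
    (r : ℕ) (hr : r ≤ e - 1) (hζr : ζ ^ p ^ (r + 1) = 1)
    (hrmin : ∀ r', r' < r → ζ ^ p ^ (r' + 1) ≠ 1)
    (hndvd : ¬ n ∣ m - 1) :
    ∀ i, 1 ≤ i →
      (n ∣ i → (Ideal.span {a i}) ^ (p ^ r * (p - 1) * d ^ (m - 1)) =
        Ideal.span {(p : 𝓞 K)}) ∧
      (¬ n ∣ i → Ideal.span {a i} = (⊤ : Ideal (𝓞 K))) :=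
  stmt11_general p e hp he d hd K c₀ a ha0 haS m n hn hper hnmin ζ hζ hζ1 r hζr hrmin hndvd
end

section
/- Let d = p^e be a prime power and c₀ ∈ ℚ̄ a Misiurewicz parameter of exact type (m, n) with m ≥ 2. Set ζ = a_{m+n−1}(c₀)/a_{m−1}(c₀) ≠ 1, and let 0 ≤ r ≤ e−1 be minimal with ζ^{p^{r+1}} = 1. Let K = ℚ(c₀). If n divides m−1, then for every i ≥ 1: ⟨a_i(c₀)⟩^{p^r(p−1)(d^{m−1}−1)} = ⟨p⟩ if n | i, and ⟨a_i(c₀)⟩ = O_K if n ∤ i. -/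
open NumberField

set_option linter.unusedSectionVars false


section VQ

open UniqueFactorizationMonoid

variable {R : Type*} [CommRing R] [IsDomain R] [IsDedekindDomain R]

/-- The multiplicity of the prime ideal `q` in the principal ideal `(x)`. -/
noncomputable def vq (q : Ideal R) (x : R) : ℕ :=
  @Multiset.count _ (Classical.decEq _) q (normalizedFactors (Ideal.span {x}))

theorem vq_mem_pow_iff {q : Ideal R} (hq : Prime q) {x : R} (hx : x ≠ 0) {k : ℕ} :
    x ∈ q ^ k ↔ k ≤ vq q x := by
  letI : DecidableEq (Ideal R) := Classical.decEq _
  have hxs : Ideal.span {x} ≠ 0 := by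
    simpa [Ideal.zero_eq_bot, Ideal.span_singleton_eq_bot] using hx
  rw [← Ideal.dvd_span_singleton, pow_dvd_iff_le_emultiplicity,
    emultiplicity_eq_count_normalizedFactors hq.irreducible hxs, normalize_eq, vq]
  exact_mod_cast Iff.rfl

theorem vq_mem_self {q : Ideal R} (hq : Prime q) {x : R} (hx : x ≠ 0) :
    x ∈ q ^ (vq q x) := (vq_mem_pow_iff hq hx).mpr le_rfl

theorem vq_pos_iff {q : Ideal R} (hq : Prime q) {x : R} (hx : x ≠ 0) :
    x ∈ q ↔ 1 ≤ vq q x := by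
  have := vq_mem_pow_iff (k := 1) hq hx
  rwa [pow_one] at this

theorem vq_span_eq {q : Ideal R} {x y : R} (h : Ideal.span {x} = Ideal.span {y}) :
    vq q x = vq q y := by
  unfold vq; rw [h]

theorem vq_mul {q : Ideal R} {x y : R} (hx : x ≠ 0) (hy : y ≠ 0) :
    vq q (x * y) = vq q x + vq q y := by
  letI : DecidableEq (Ideal R) := Classical.decEq _
  have hxs : Ideal.span {x} ≠ 0 := by
    simpa [Ideal.zero_eq_bot, Ideal.span_singleton_eq_bot] using hx
  have hys : Ideal.span {y} ≠ 0 := by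
    simpa [Ideal.zero_eq_bot, Ideal.span_singleton_eq_bot] using hy
  unfold vq
  rw [← Ideal.span_singleton_mul_span_singleton, normalizedFactors_mul hxs hys,
    Multiset.count_add]

theorem vq_pow {q : Ideal R} {x : R} (hx : x ≠ 0) (s : ℕ) :
    vq q (x ^ s) = s * vq q x := by
  induction s with
  | zero =>
    simp only [pow_zero, Nat.zero_mul]
    unfold vq
    rw [Ideal.span_singleton_one, ← Ideal.one_eq_top, normalizedFactors_one]
    simp
  | succ s ih =>
    rw [pow_succ, vq_mul (pow_ne_zero _ hx) hx, ih]
    ring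

theorem vq_top {q : Ideal R} {x : R} (h : Ideal.span {x} = ⊤) : vq q x = 0 := by
  unfold vq
  rw [h, ← Ideal.one_eq_top, normalizedFactors_one]
  simp

theorem vq_add_eq {q : Ideal R} (hq : Prime q) {x y : R} (hx : x ≠ 0)
    (hy : y ∈ q ^ (vq q x + 1)) : x + y ≠ 0 ∧ vq q (x + y) = vq q x := by
  have hxm : x ∈ q ^ (vq q x) := vq_mem_self hq hx
  have hxn : x ∉ q ^ (vq q x + 1) := by
    intro h
    have := (vq_mem_pow_iff hq hx).mp h
    omega
  have hne : x + y ≠ 0 := by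
    intro h
    have hyx : y = -x := eq_neg_of_add_eq_zero_right h
    rw [hyx] at hy
    exact hxn (by simpa using neg_mem hy)
  refine ⟨hne, le_antisymm ?_ ?_⟩
  · by_contra hgt
    push_neg at hgt
    have hmem : x + y ∈ q ^ (vq q x + 1) :=
      (vq_mem_pow_iff hq hne).mpr hgt
    exact hxn (by simpa using sub_mem hmem hy)
  · refine (vq_mem_pow_iff hq hne).mp (add_mem hxm ?_)
    exact Ideal.pow_le_pow_right (Nat.le_succ _) hy

theorem span_eq_span_of_vq {x y : R} (hx : x ≠ 0) (hy : y ≠ 0)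
    (h : ∀ q : Ideal R, Prime q → vq q x = vq q y) :
    Ideal.span {x} = Ideal.span {y} := by
  letI : DecidableEq (Ideal R) := Classical.decEq _
  have key : ∀ u v : R, u ≠ 0 → v ≠ 0 → (∀ q : Ideal R, Prime q → vq q u ≤ vq q v) →
      Ideal.span {u} ∣ Ideal.span {v} := by
    intro u v hu hv hle
    have hus : Ideal.span {u} ≠ 0 := by
      simpa [Ideal.zero_eq_bot, Ideal.span_singleton_eq_bot] using hu
    have hvs : Ideal.span {v} ≠ 0 := by
      simpa [Ideal.zero_eq_bot, Ideal.span_singleton_eq_bot] using hv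
    rw [dvd_iff_normalizedFactors_le_normalizedFactors hus hvs, Multiset.le_iff_count]
    intro q
    by_cases hqmem : q ∈ normalizedFactors (Ideal.span {u})
    · exact hle q (prime_of_normalized_factor q hqmem)
    · simp [Multiset.count_eq_zero.mpr hqmem]
  exact associated_iff_eq.mp (associated_of_dvd_dvd
    (key x y hx hy fun q hq => (h q hq).le) (key y x hy hx fun q hq => (h q hq).ge))

end VQ

/-- d = p^e, c₀ a Misiurewicz parameter of exact type (m,n),
m ≥ 2, ζ = a_{m+n−1}/a_{m−1} ≠ 1 a d-th root of unity, r minimal with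
ζ^{p^{r+1}} = 1. If n ∣ m−1, then for i ≥ 1:
⟨a_i⟩^{p^r(p−1)(d^{m−1}−1)} = ⟨p⟩ if n ∣ i, and ⟨a_i⟩ = O_K if n ∤ i. -/
theorem stmt12 (p e : ℕ) (hp : p.Prime) (he : 1 ≤ e) (d : ℕ) (hd : d = p ^ e)
    (K : Type*) [Field K] [NumberField K]
    (c₀ : 𝓞 K) (hK : Algebra.adjoin ℚ {algebraMap (𝓞 K) K c₀} = ⊤)
    (a : ℕ → 𝓞 K) (ha0 : a 0 = 0) (haS : ∀ i, a (i + 1) = a i ^ d + c₀)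
    (m n : ℕ) (hm : 2 ≤ m) (hn : 1 ≤ n)
    (hper : a (m + n) = a m)
    (hnmin : ∀ k, 0 < k → k < n → a (m + k) ≠ a m)
    (hmmin : ∀ m', m' < m → ∀ k, 0 < k → a (m' + k) ≠ a m')
    (ζ : 𝓞 K) (hζ : a (m + n - 1) = ζ * a (m - 1)) (hζd : ζ ^ d = 1)
    (hζ1 : ζ ≠ 1)
    (r : ℕ) (hr : r ≤ e - 1) (hζr : ζ ^ p ^ (r + 1) = 1)
    (hrmin : ∀ r', r' < r → ζ ^ p ^ (r' + 1) ≠ 1)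
    (hndvd : n ∣ m - 1) :
    ∀ i, 1 ≤ i →
      (n ∣ i → (Ideal.span {a i}) ^ (p ^ r * (p - 1) * (d ^ (m - 1) - 1)) =
        Ideal.span {(p : 𝓞 K)}) ∧
      (¬ n ∣ i → Ideal.span {a i} = (⊤ : Ideal (𝓞 K))) := by
  classical
  have hp2 : 2 ≤ p := hp.two_le
  have hd2 : 2 ≤ d := by
    rw [hd]
    calc 2 ≤ p := hp2
    _ = p ^ 1 := (pow_one p).symm
    _ ≤ p ^ e := Nat.pow_le_pow_right (by omega) he
  have hd0 : d ≠ 0 := by omega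
  have hane : ∀ i, 1 ≤ i → a i ≠ 0 := by
    intro i hi
    have h := hmmin 0 (by omega) i (by omega)
    simpa [ha0] using h
  set S : ℕ → ℕ → 𝓞 K := fun i j => ∑ u ∈ Finset.range d, a i ^ u * a j ^ (d - 1 - u)
    with hSdef
  have hstep : ∀ i j, a (i + 1) - a (j + 1) = (a i - a j) * S i j := by
    intro i j
    rw [haS, haS]
    simp only [hSdef]
    linear_combination -(geom_sum₂_mul (a i) (a j) d)
  have hprod : ∀ k i j, a (i + k) - a (j + k)
      = (a i - a j) * ∏ s ∈ Finset.range k, S (i + s) (j + s) := by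
    intro k
    induction k with
    | zero => intro i j; simp
    | succ k ih =>
      intro i j
      have h1 : i + (k + 1) = (i + k) + 1 := by omega
      have h2 : j + (k + 1) = (j + k) + 1 := by omega
      rw [h1, h2, hstep, ih, Finset.prod_range_succ]
      ring
  have htail : ∀ s, a (m + s + n) = a (m + s) := by
    intro s
    induction s with
    | zero => simpa using hper
    | succ s ih =>
      have h1 : m + (s + 1) + n = (m + s + n) + 1 := by omega
      have h2 : m + (s + 1) = (m + s) + 1 := by omega
      rw [h1, h2, haS, haS, ih]
  have htail' : ∀ j, m ≤ j → a (j + n) = a j := by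
    intro j hj
    have h1 : j = m + (j - m) := by omega
    rw [h1]
    exact htail _
  -- rank of a prime ideal
  have hrank : ∀ q : Ideal (𝓞 K), q.IsPrime → ∀ i, 1 ≤ i → a i ∈ q → (a n ∈ q ∧ n ∣ i) := by
    intro q hq i hi hai
    have hex : ∃ s, 1 ≤ s ∧ a s ∈ q := ⟨i, hi, hai⟩
    set t := Nat.find hex with htdef
    obtain ⟨ht1, hat⟩ : 1 ≤ t ∧ a t ∈ q := Nat.find_spec hex
    have htmin : ∀ s, s < t → ¬(1 ≤ s ∧ a s ∈ q) := fun s hs => Nat.find_min hex hs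
    have ht0 : 0 < t := ht1
    have hmodq : ∀ j, a (j + t) - a j ∈ q := by
      intro j
      induction j with
      | zero => simpa [ha0] using hat
      | succ j ih =>
        have h1 : j + 1 + t = (j + t) + 1 := by omega
        rw [h1, hstep]
        exact Ideal.mul_mem_right _ _ ih
    have hmodq' : ∀ s j, a (j + s * t) - a j ∈ q := by
      intro s
      induction s with
      | zero => intro j; simp
      | succ s ih =>
        intro j
        have h2 : a (j + (s + 1) * t) - a j
            = (a ((j + s * t) + t) - a (j + s * t)) + (a (j + s * t) - a j) := by
          have h1 : j + (s + 1) * t = (j + s * t) + t := by ring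
          rw [h1]; ring
        rw [h2]
        exact add_mem (hmodq _) (ih j)
    have hdvd_of_mem : ∀ k, a k ∈ q → t ∣ k := by
      intro k hk
      have h1 : k % t + (k / t) * t = k := Nat.mod_add_div' k t
      have h2 : a k - a (k % t) ∈ q := by
        have h3 := hmodq' (k / t) (k % t)
        rwa [h1] at h3
      have h3 : a (k % t) ∈ q := by
        have h4 := sub_mem hk h2
        simpa using h4
      by_cases h4 : k % t = 0
      · exact Nat.dvd_of_mod_eq_zero h4
      · exact absurd ⟨by omega, h3⟩ (htmin _ (Nat.mod_lt _ ht0))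
    have hmem_of_dvd : ∀ k, t ∣ k → a k ∈ q := by
      rintro k ⟨s, rfl⟩
      have h1 := hmodq' s 0
      simp only [zero_add, ha0, sub_zero] at h1
      rwa [mul_comm]
    have htn : t ∣ n := by
      have h1 : a (m * t) ∈ q := hmem_of_dvd _ ⟨m, mul_comm _ _⟩
      have h2 : a (m * t + n) = a (m * t) := htail' _ (Nat.le_mul_of_pos_right m ht0)
      have h3 : t ∣ m * t + n := hdvd_of_mem _ (by rw [h2]; exact h1)
      have h4 : t ∣ m * t := ⟨m, mul_comm _ _⟩
      exact (Nat.dvd_add_right h4).mp h3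
    have hteq : t = n := by
      rcases lt_or_eq_of_le (Nat.le_of_dvd (by omega) htn) with hlt | heq
      · exfalso
        set s₀ := (t - m % t) % t with hs₀def
        have hs₀t : s₀ < t := Nat.mod_lt _ ht0
        have hts₀ : t ∣ m + s₀ := by
          apply Nat.dvd_of_mod_eq_zero
          rw [Nat.add_mod, Nat.mod_eq_of_lt hs₀t]
          by_cases h5 : m % t = 0
          · have h7 : s₀ = 0 := by rw [hs₀def, h5, Nat.sub_zero, Nat.mod_self]
            rw [h5, h7]
            simp
          · have hut : m % t < t := Nat.mod_lt _ ht0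
            have h7 : s₀ = t - m % t := by
              rw [hs₀def]
              exact Nat.mod_eq_of_lt (by omega)
            rw [h7]
            have h8 : m % t + (t - m % t) = t := by omega
            rw [h8, Nat.mod_self]
        have hG := hprod n (m + t) m
        have hL1 : a (m + t + n) = a (m + t) := htail' _ (by omega)
        rw [hL1, hper] at hG
        have hδne : a (m + t) - a m ≠ 0 := sub_ne_zero.mpr (hnmin t ht0 hlt)
        have hG1 : (∏ s ∈ Finset.range n, S (m + t + s) (m + s)) = 1 := by
          have h8 : (a (m + t) - a m) * (∏ s ∈ Finset.range n, S (m + t + s) (m + s))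
              = (a (m + t) - a m) * 1 := by rw [mul_one, ← hG]
          exact mul_left_cancel₀ hδne h8
        have hx : a (m + s₀) ∈ q := hmem_of_dvd _ hts₀
        have hy : a (m + t + s₀) ∈ q := by
          apply hmem_of_dvd
          have h9 : m + t + s₀ = (m + s₀) + t := by omega
          rw [h9]
          exact dvd_add hts₀ dvd_rfl
        have hSq : S (m + t + s₀) (m + s₀) ∈ q := by
          simp only [hSdef]
          refine Ideal.sum_mem _ ?_
          intro u hu
          rcases Nat.eq_zero_or_pos u with rfl | h9
          · have h10 : d - 1 - 0 = (d - 2) + 1 := by omega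
            rw [pow_zero, one_mul, h10, pow_succ]
            exact Ideal.mul_mem_left _ _ hx
          · have h10 : u = (u - 1) + 1 := by omega
            rw [h10, pow_succ]
            exact Ideal.mul_mem_right _ _ (Ideal.mul_mem_left _ _ hy)
        have hGq : (∏ s ∈ Finset.range n, S (m + t + s) (m + s)) ∈ q := by
          have hmem : s₀ ∈ Finset.range n := Finset.mem_range.mpr (by omega)
          rw [← Finset.mul_prod_erase _ _ hmem]
          exact Ideal.mul_mem_right _ _ hSq
        rw [hG1] at hGq
        exact hq.ne_top (q.eq_top_of_isUnit_mem hGq isUnit_one)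
      · exact heq
    exact ⟨hteq ▸ hat, hteq ▸ hdvd_of_mem i hai⟩
  -- Part 1 : a i is a unit when n does not divide i
  have hpart1 : ∀ i, 1 ≤ i → ¬ n ∣ i → Ideal.span {a i} = ⊤ := by
    intro i hi hni
    by_contra hne
    obtain ⟨q, hqmax, hle⟩ := Ideal.exists_le_maximal _ hne
    have hai : a i ∈ q := hle (Ideal.mem_span_singleton_self _)
    exact hni (hrank q hqmax.isPrime i hi hai).2
  -- Part 3 : span (a (n k)) = span (a n)
  have hpart3 : ∀ k, 1 ≤ k → ∃ z, Ideal.span {z} = ⊤ ∧ a (n * k) = a n * z := by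
    intro k hk
    induction k with
    | zero => omega
    | succ k ih =>
      rcases Nat.eq_zero_or_pos k with rfl | hk1
      · exact ⟨1, by simp, by simp⟩
      obtain ⟨z, hz, hzk⟩ := ih hk1
      have hP := hprod n (n * k) 0
      simp only [zero_add, ha0, sub_zero] at hP
      have h0mem : (0 : ℕ) ∈ Finset.range n := Finset.mem_range.mpr (by omega)
      rw [← Finset.mul_prod_erase _ _ h0mem] at hP
      set W := ∏ s ∈ (Finset.range n).erase 0, S (n * k + s) s with hW
      have hS0 : S (n * k + 0) 0 = a (n * k) ^ (d - 1) := by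
        simp only [hSdef, ha0, Nat.add_zero]
        have hsum := Finset.sum_eq_single (f := fun u => a (n * k) ^ u * (0 : 𝓞 K) ^ (d - 1 - u))
          (d - 1) (fun u hu hne => by
            have hu' : u < d := Finset.mem_range.mp hu
            show a (n * k) ^ u * (0 : 𝓞 K) ^ (d - 1 - u) = 0
            rw [zero_pow (by omega : d - 1 - u ≠ 0), mul_zero])
          (fun h => absurd (Finset.mem_range.mpr (by omega)) h)
        rw [hsum]
        simp
      rw [hS0] at hP
      have hpowgen : ∀ x : 𝓞 K, x * x ^ (d - 1) = x ^ d := by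
        intro x
        conv_rhs => rw [show d = (d - 1) + 1 by omega]
        rw [pow_succ]
        ring
      have h1 : a (n * k + n) = a n + a (n * k) ^ d * W := by
        linear_combination hP + W * hpowgen (a (n * k))
      have hkn1 : n * (k + 1) = n * k + n := by ring
      set z' := 1 + a n ^ (d - 1) * (z ^ d * W) with hz'
      have key : a (n * (k + 1)) = a n * z' := by
        rw [hkn1, h1, hzk, hz', mul_pow]
        linear_combination (z ^ d * W) * (hpowgen (a n)).symm
      refine ⟨z', ?_, key⟩
      by_contra hzne
      obtain ⟨q, hqmax, hle⟩ := Ideal.exists_le_maximal _ hzne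
      have hz'q : z' ∈ q := hle (Ideal.mem_span_singleton_self _)
      have hmem2 : a (n * (k + 1)) ∈ q := by
        rw [key]; exact Ideal.mul_mem_left _ _ hz'q
      have hpos : 1 ≤ n * (k + 1) := Nat.mul_pos (by omega : 0 < n) (Nat.succ_pos k)
      have han : a n ∈ q := (hrank q hqmax.isPrime _ hpos hmem2).1
      have h1q : (1 : 𝓞 K) ∈ q := by
        have h2 : a n ^ (d - 1) * (z ^ d * W) ∈ q := by
          have h3 : a n ^ (d - 1) ∈ q := by
            rw [show d - 1 = (d - 2) + 1 by omega, pow_succ]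
            exact Ideal.mul_mem_left _ _ han
          exact Ideal.mul_mem_right _ _ h3
        have h4 := sub_mem hz'q h2
        rw [hz'] at h4
        simpa using h4
      exact hqmax.ne_top (q.eq_top_of_isUnit_mem h1q isUnit_one)
  have hspan3 : ∀ i, 1 ≤ i → n ∣ i → Ideal.span {a i} = Ideal.span {a n} := by
    rintro i hi ⟨k, rfl⟩
    have hk1 : 1 ≤ k := by
      rcases Nat.eq_zero_or_pos k with rfl | h
      · simp at hi
      · exact h
    obtain ⟨z, hz, hzk⟩ := hpart3 k hk1
    rw [hzk, ← Ideal.span_singleton_mul_span_singleton, hz, Ideal.mul_top]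
  -- ζ is a primitive p^(r+1)-st root of unity
  have hζprim : IsPrimitiveRoot ζ (p ^ (r + 1)) := by
    have h1 : orderOf ζ ∣ p ^ (r + 1) := orderOf_dvd_of_pow_eq_one hζr
    obtain ⟨s, hs, hse⟩ := (Nat.dvd_prime_pow hp).mp h1
    have hsr : s = r + 1 := by
      by_contra hne
      have hs' : s ≤ r := by omega
      have h2 : orderOf ζ ∣ p ^ r := by
        rw [hse]
        exact Nat.pow_dvd_pow p hs'
      have h3 : ζ ^ p ^ r = 1 := orderOf_dvd_iff_pow_eq_one.mp h2
      rcases Nat.eq_zero_or_pos r with rfl | hr1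
      · rw [pow_zero, pow_one] at h3
        exact hζ1 h3
      · exact hrmin (r - 1) (by omega) (by rw [show r - 1 + 1 = r by omega]; exact h3)
    have hord : orderOf ζ = p ^ (r + 1) := by rw [hse, hsr]
    exact hord ▸ IsPrimitiveRoot.orderOf ζ
  haveI hfact : Fact p.Prime := ⟨hp⟩
  have hassocp : Associated ((p : 𝓞 K)) ((ζ - 1) ^ (p ^ r * (p - 1))) := by
    have hcyc := Polynomial.eval_one_cyclotomic_prime_pow (R := 𝓞 K) (p := p) r
    rw [Polynomial.cyclotomic_eq_prod_X_sub_primitiveRoots hζprim, Polynomial.eval_prod] at hcyc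
    simp only [Polynomial.eval_sub, Polynomial.eval_X, Polynomial.eval_C] at hcyc
    have hppos : 0 < p ^ (r + 1) := pow_pos hp.pos _
    haveI : NeZero (p ^ (r + 1)) := ⟨hppos.ne'⟩
    have hdvd : ∀ x y : 𝓞 K, IsPrimitiveRoot y (p ^ (r + 1)) → x ^ p ^ (r + 1) = 1 →
        (1 - y) ∣ (1 - x) := by
      intro x y hy hx
      obtain ⟨i, _, hi⟩ := hy.eq_pow_of_pow_eq_one hx
      refine ⟨∑ u ∈ Finset.range i, y ^ u, ?_⟩
      rw [← hi]
      linear_combination geom_sum_mul y i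
    have hassoc_each : ∀ μ ∈ primitiveRoots (p ^ (r + 1)) (𝓞 K), Associated (1 - μ) (1 - ζ) := by
      intro μ hμ
      have hμprim := (mem_primitiveRoots hppos).mp hμ
      exact associated_of_dvd_dvd (hdvd ζ μ hμprim hζprim.pow_eq_one)
        (hdvd μ ζ hζprim hμprim.pow_eq_one)
    have hprodassoc : ∀ s : Finset (𝓞 K), (∀ μ ∈ s, Associated (1 - μ) (1 - ζ)) →
        Associated (∏ μ ∈ s, (1 - μ)) ((1 - ζ) ^ s.card) := by
      intro s
      induction s using Finset.induction_on with
      | empty => intro _; simp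
      | @insert x s' hxs ih =>
        intro h
        rw [Finset.prod_insert hxs, Finset.card_insert_of_notMem hxs, pow_succ']
        exact (h x (Finset.mem_insert_self _ _)).mul_mul
          (ih fun μ hμ => h μ (Finset.mem_insert_of_mem hμ))
    have hcard : (primitiveRoots (p ^ (r + 1)) (𝓞 K)).card = p ^ r * (p - 1) := by
      rw [hζprim.card_primitiveRoots, Nat.totient_prime_pow hp (by omega)]
      simp
    have h9 : Associated ((p : 𝓞 K)) ((1 - ζ) ^ (p ^ r * (p - 1))) := by
      rw [← hcard, ← hcyc]
      exact (hprodassoc _ hassoc_each).symm.symm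
    have h11 : Associated (1 - ζ) (ζ - 1) := by
      refine ⟨-1, ?_⟩
      rw [Units.val_neg, Units.val_one]
      ring
    exact h9.trans (Associated.pow_pow h11)
  -- basic nonvanishing
  have hanz : a n ≠ 0 := hane n hn
  have hζz : ζ - 1 ≠ 0 := sub_ne_zero.mpr hζ1
  have hpz : (p : 𝓞 K) ≠ 0 := Nat.cast_ne_zero.mpr (by omega)
  have hNpos : 0 < p ^ r * (p - 1) := Nat.mul_pos (pow_pos hp.pos r) (by omega)
  -- main valuation computation
  have hvmain : ∀ q : Ideal (𝓞 K), Prime q →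
      vq q (ζ - 1) = (d ^ (m - 1) - 1) * vq q (a n) := by
    intro q hq
    have hqP : q.IsPrime := Ideal.isPrime_of_prime hq
    set M := m - 1 with hMdef
    set α := vq q (a n) with hα
    set w := vq q ((p : 𝓞 K)) with hw
    set δ := vq q (ζ - 1) with hδ
    have hM1 : 1 ≤ M := by omega
    have hNw : p ^ r * (p - 1) * δ = w := by
      have h1 : Ideal.span {(p : 𝓞 K)} = Ideal.span {(ζ - 1) ^ (p ^ r * (p - 1))} :=
        Ideal.span_singleton_eq_span_singleton.mpr hassocp
      have h2 := vq_span_eq (q := q) h1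
      rw [vq_pow hζz] at h2
      rw [hw, hδ]
      exact h2.symm
    set b : ℕ → 𝓞 K := fun j => a (n + j) - a j with hb
    have hb1 : b 1 = a n ^ d := by
      simp only [hb]
      have h1 : a (n + 1) = a n ^ d + c₀ := haS n
      have h2 : a 1 = c₀ := by
        have h3 := haS 0
        simp only [ha0, zero_pow hd0, zero_add] at h3
        simpa using h3
      rw [h1, h2]
      ring
    have hbM : b M = (ζ - 1) * a M := by
      simp only [hb]
      have h1 : n + M = m + n - 1 := by omega
      rw [h1, hζ]
      ring
    have hbne : ∀ j, j ≤ M → b j ≠ 0 := by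
      intro j hj
      simp only [hb]
      refine sub_ne_zero.mpr ?_
      have h1 := hmmin j (by omega) n (by omega)
      rw [add_comm]
      exact h1
    set Rj : ℕ → 𝓞 K := fun j => ∑ i ∈ Finset.range (d - 1),
        a j ^ (i + 1) * b j ^ (d - (i + 1)) * ((d.choose (i + 1) : ℕ) : 𝓞 K) with hRjdef
    have hrec : ∀ j, b (j + 1) = b j ^ d + Rj j := by
      intro j
      have h2 : a (n + j) = a j + b j := by simp only [hb]; ring
      have h3 : b (j + 1) = (a j + b j) ^ d - a j ^ d := by
        simp only [hb]
        rw [show n + (j + 1) = (n + j) + 1 by omega, haS, haS, ← h2]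
        ring
      rw [h3, add_pow]
      rw [Finset.sum_range_succ, Nat.sub_self, pow_zero, Nat.choose_self]
      have h5 := Finset.sum_range_succ'
        (fun l => a j ^ l * b j ^ (d - l) * ((d.choose l : ℕ) : 𝓞 K)) (d - 1)
      rw [show d - 1 + 1 = d by omega] at h5
      rw [h5]
      simp only [pow_zero, one_mul, Nat.sub_zero, Nat.choose_zero_right, Nat.cast_one, mul_one,
        Nat.cast_ofNat]
      push_cast
      simp only [hRjdef]
      ring
    have hRmem : ∀ j (cc β : ℕ), (p : 𝓞 K) ∈ q ^ cc → b j ∈ q ^ β → Rj j ∈ q ^ (cc + β) := by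
      intro j cc β hpc hbj
      simp only [hRjdef]
      refine Ideal.sum_mem _ ?_
      intro i hi
      have hi1 : i + 1 ≤ d - 1 := by
        have := Finset.mem_range.mp hi
        omega
      have hdl : p ∣ d.choose (i + 1) := by
        rw [hd]
        exact Nat.Prime.dvd_choose_pow hp (by omega) (by rw [← hd]; omega)
      obtain ⟨cnum, hc⟩ := hdl
      have hcast : ((d.choose (i + 1) : ℕ) : 𝓞 K) = (p : 𝓞 K) * (cnum : 𝓞 K) := by
        rw [hc]
        push_cast
        ring
      have hbpow : b j ^ (d - (i + 1)) ∈ q ^ β := by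
        rw [show d - (i + 1) = (d - (i + 1) - 1) + 1 by omega, pow_succ]
        exact Ideal.mul_mem_left _ _ hbj
      have heq : a j ^ (i + 1) * b j ^ (d - (i + 1)) * ((d.choose (i + 1) : ℕ) : 𝓞 K)
          = (a j ^ (i + 1) * (cnum : 𝓞 K)) * ((p : 𝓞 K) * b j ^ (d - (i + 1))) := by
        rw [hcast]
        ring
      rw [heq, pow_add]
      exact Ideal.mul_mem_left _ _ (Ideal.mul_mem_mul hpc hbpow)
    have hmul_split : ∀ v : ℕ, d * v = v + (d - 1) * v := by
      intro v
      calc d * v = ((d - 1) + 1) * v := by rw [show (d - 1) + 1 = d by omega]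
      _ = v + (d - 1) * v := by ring
    have hA : ∀ j, 1 ≤ j → j ≤ M →
        (∀ i, 1 ≤ i → i < j → (d - 1) * vq q (b i) < w) → vq q (b j) = d ^ j * α := by
      intro j
      induction j with
      | zero => omega
      | succ j ih =>
        intro _ hjM hsmall
        rcases Nat.eq_zero_or_pos j with rfl | hj1
        · rw [hb1, vq_pow hanz, pow_one, ← hα]
        · have hvbj : vq q (b j) = d ^ j * α :=
            ih hj1 (by omega) (fun i hi1 hi2 => hsmall i hi1 (by omega))
          have hlt : (d - 1) * vq q (b j) < w := hsmall j hj1 (by omega)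
          have hbjne : b j ≠ 0 := hbne j (by omega)
          have hxne : b j ^ d ≠ 0 := pow_ne_zero _ hbjne
          have hvx : vq q (b j ^ d) = d * vq q (b j) := vq_pow hbjne d
          have hy : Rj j ∈ q ^ (vq q (b j ^ d) + 1) := by
            refine Ideal.pow_le_pow_right ?_
              (hRmem j w (vq q (b j)) (vq_mem_self hq hpz) (vq_mem_self hq hbjne))
            rw [hvx]
            have hdc := hmul_split (vq q (b j))
            linarith
          obtain ⟨hne2, heq2⟩ := vq_add_eq hq hxne hy
          rw [hrec j, heq2, hvx, hvbj, pow_succ]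
          ring
    have hB : ∀ j₀, 1 ≤ j₀ → w ≤ (d - 1) * vq q (b j₀) → ∀ j, j₀ ≤ j → j ≤ M →
        vq q (b j₀) + (j - j₀) * w ≤ vq q (b j) := by
      intro j₀ hj₀1 hwle j hj₀j
      induction j, hj₀j using Nat.le_induction with
      | base => intro _; simp
      | succ j hj ih =>
        intro hjM
        have hIH := ih (by omega)
        have hbjne : b j ≠ 0 := hbne j (by omega)
        have hbj1ne : b (j + 1) ≠ 0 := hbne _ hjM
        have hv0 : vq q (b j₀) ≤ vq q (b j) := by
          have h0 : (j - j₀) * w ≥ 0 := Nat.zero_le _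
          omega
        have hmem1 : b j ^ d ∈ q ^ (vq q (b j) + w) := by
          have h1 : b j ^ d ∈ q ^ (d * vq q (b j)) := by
            rw [mul_comm, pow_mul]
            exact Ideal.pow_mem_pow (vq_mem_self hq hbjne) d
          refine Ideal.pow_le_pow_right ?_ h1
          have h2 : w ≤ (d - 1) * vq q (b j) :=
            le_trans hwle (Nat.mul_le_mul_left _ hv0)
          have h3 := hmul_split (vq q (b j))
          linarith
        have hmem2 : Rj j ∈ q ^ (vq q (b j) + w) := by
          have h1 := hRmem j w (vq q (b j)) (vq_mem_self hq hpz) (vq_mem_self hq hbjne)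
          rwa [Nat.add_comm] at h1
        have hmem3 : b (j + 1) ∈ q ^ (vq q (b j) + w) := by
          rw [hrec j]
          exact add_mem hmem1 hmem2
        have h4 : vq q (b j) + w ≤ vq q (b (j + 1)) := (vq_mem_pow_iff hq hbj1ne).mp hmem3
        have h5 : j + 1 - j₀ = (j - j₀) + 1 := by omega
        rw [h5, add_mul, one_mul]
        linarith
    have haMne : a M ≠ 0 := hane M (by omega)
    have hvaM : vq q (a M) = α := by
      rw [hα]
      exact vq_span_eq (hspan3 M hM1 hndvd)
    have hvbM : vq q (b M) = δ + α := by
      rw [hbM, vq_mul hζz haMne, hvaM]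
    rcases Nat.eq_zero_or_pos α with hα0 | hα1
    · -- α = 0 : show δ = 0
      suffices h : δ = 0 by rw [h, hα0, Nat.mul_zero]
      by_contra hδne0
      have hδ1 : 1 ≤ δ := by omega
      have hw1 : 1 ≤ w := by
        have h1 : 0 < p ^ r * (p - 1) * δ := Nat.mul_pos hNpos (by omega)
        omega
      have hpq : (p : 𝓞 K) ∈ q := by
        have := (vq_pos_iff hq hpz).mpr (by rw [← hw]; exact hw1)
        exact this
      have hζq : ζ - 1 ∈ q := (vq_pos_iff hq hζz).mpr (by rw [← hδ]; exact hδ1)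
      have hchain : ∀ j, 1 ≤ j → j ≤ M → b j ∈ q → a n ∈ q := by
        intro j
        induction j with
        | zero => omega
        | succ j ih =>
          intro _ hjM hbjq
          rcases Nat.eq_zero_or_pos j with rfl | hj1
          · rw [hb1] at hbjq
            exact hqP.mem_of_pow_mem d hbjq
          · have hRq : Rj j ∈ q := by
              have htop : b j ∈ q ^ 0 := by
                rw [pow_zero, Ideal.one_eq_top]
                exact Submodule.mem_top
              have h1 := hRmem j 1 0 (by rwa [pow_one]) htop
              simpa using h1
            have hbjd : b j ^ d ∈ q := by
              have h6 : b j ^ d = b (j + 1) - Rj j := by rw [hrec j]; ring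
              rw [h6]
              exact sub_mem hbjq hRq
            exact ih hj1 (by omega) (hqP.mem_of_pow_mem d hbjd)
      have hbMq : b M ∈ q := by
        rw [hbM]
        exact Ideal.mul_mem_right _ _ hζq
      have han := hchain M (by omega) le_rfl hbMq
      have h7 := (vq_pos_iff hq hanz).mp han
      omega
    · -- α ≥ 1
      by_cases hall : ∀ i, 1 ≤ i → i < M → (d - 1) * vq q (b i) < w
      · have hvbM2 : vq q (b M) = d ^ M * α := hA M hM1 le_rfl hall
        have hdM1 : 1 ≤ d ^ M := Nat.one_le_pow _ _ (by omega)
        have h11 : d ^ M * α = (d ^ M - 1) * α + α := by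
          conv_lhs => rw [← Nat.sub_add_cancel hdM1]
          rw [add_mul, one_mul]
        have h12 : δ + α = (d ^ M - 1) * α + α := by
          rw [← h11, ← hvbM2, hvbM]
        exact Nat.add_right_cancel h12
      · exfalso
        push_neg at hall
        have hexQ : ∃ i, 1 ≤ i ∧ i < M ∧ w ≤ (d - 1) * vq q (b i) := by
          obtain ⟨i, h1, h2, h3⟩ := hall
          exact ⟨i, h1, h2, h3⟩
        set i₀ := Nat.find hexQ with hi₀def
        obtain ⟨hi₀1, hi₀M, hi₀w⟩ := Nat.find_spec hexQ
        have hvb0 : vq q (b i₀) = d ^ i₀ * α := by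
          refine hA i₀ hi₀1 (by omega) ?_
          intro i hi1 hii₀
          have h7 := Nat.find_min hexQ hii₀
          push_neg at h7
          exact h7 hi1 (by omega)
        have hBM := hB i₀ hi₀1 hi₀w M (by omega) le_rfl
        have hδw : δ ≤ w := by
          calc δ ≤ p ^ r * (p - 1) * δ := Nat.le_mul_of_pos_left δ hNpos
          _ = w := hNw
        have h8 : w ≤ (M - i₀) * w := Nat.le_mul_of_pos_left w (by omega)
        have h9 : 2 * α ≤ d ^ i₀ * α := by
          refine Nat.mul_le_mul_right α ?_
          calc 2 ≤ d := hd2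
          _ = d ^ 1 := (pow_one d).symm
          _ ≤ d ^ i₀ := Nat.pow_le_pow_right (by omega) hi₀1
        linarith [hvbM, hBM, hvb0]
  -- key ideal identity
  have hkey : Ideal.span {ζ - 1} = Ideal.span {a n} ^ (d ^ (m - 1) - 1) := by
    rw [Ideal.span_singleton_pow]
    refine span_eq_span_of_vq hζz (pow_ne_zero _ hanz) ?_
    intro q hq
    rw [vq_pow hanz]
    exact hvmain q hq
  intro i hi
  constructor
  · intro hni
    rw [hspan3 i hi hni]
    have hE : p ^ r * (p - 1) * (d ^ (m - 1) - 1)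
        = (d ^ (m - 1) - 1) * (p ^ r * (p - 1)) := by ring
    rw [hE, pow_mul, ← hkey, Ideal.span_singleton_pow,
      ← Ideal.span_singleton_eq_span_singleton.mpr hassocp]
  · exact hpart1 i hi
end

section
/- Let d = p^e be a prime power, m ≥ 2, and ζ ≠ 1 a d-th root of unity. Then the Misiurewicz polynomial G^ζ_{d,m,1}(c) = a_m(c) − ζ·a_{m−1}(c) divided by a_1(c) = c, i.e., G^ζ_{d,m,1} = (a_m − ζ a_{m−1})/a_1, is irreducible over ℚ(ζ). -/
/-!
Work over `𝓞 K`, where `π = ζ - 1` is a prime above `p`. Modulo `π` we have `ζ ≡ 1`, and in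
characteristic `p` the Frobenius gives `a_{i+1} - a_i = (a_i - a_{i-1}) ^ d = X ^ d ^ i`. So
`G = (a_m - ζ a_{m-1}) / X` is monic and congruent to `X ^ deg G` modulo `π`, while its constant
term `1 - ζ` is not divisible by `π ^ 2`: `G` is Eisenstein at `π`, and Gauss's lemma carries
irreducibility from `𝓞 K` to `K`.
-/

open Polynomial NumberField

namespace Polynomial

/-- The orbit `a_i` of the critical point `0` of `z ↦ z ^ d + c`, as polynomials in `c = X`. -/
noncomputable def critOrbit (R : Type*) [CommRing R] (d : ℕ) : ℕ → R[X]
  | 0 => 0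
  | i + 1 => critOrbit R d i ^ d + X

/-- `G^θ_{d,m,1} = (a_m - θ a_{m-1}) / a_1`, where `a_1 = X`. -/
noncomputable def misiurewicz (R : Type*) [CommRing R] (d m : ℕ) (θ : R) : R[X] :=
  (critOrbit R d m - C θ * critOrbit R d (m - 1)) /ₘ X

section critOrbit

variable {R : Type*} [CommRing R] {d : ℕ}

@[simp] theorem critOrbit_zero : critOrbit R d 0 = 0 := rfl

@[simp] theorem critOrbit_succ (i : ℕ) : critOrbit R d (i + 1) = critOrbit R d i ^ d + X := rfl

theorem eq_critOrbit {a : ℕ → R[X]} (h0 : a 0 = 0)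
    (hS : ∀ i, a (i + 1) = a i ^ d + X) : a = critOrbit R d := by
  funext i
  induction i with
  | zero => exact h0
  | succ i ih => rw [hS, ih, critOrbit_succ]

theorem map_critOrbit {S : Type*} [CommRing S] (f : R →+* S) (i : ℕ) :
    (critOrbit R d i).map f = critOrbit S d i := by
  induction i with
  | zero => simp
  | succ i ih => simp [Polynomial.map_pow, ih]

theorem X_dvd_critOrbit (hd : d ≠ 0) (i : ℕ) : X ∣ critOrbit R d i := by
  cases i with
  | zero => simp
  | succ i => rw [critOrbit_succ]; exact dvd_add (dvd_pow (X_dvd_critOrbit hd i) hd) dvd_rfl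

theorem critOrbit_one (hd : d ≠ 0) : critOrbit R d 1 = X := by
  simp [zero_pow hd]

theorem coeff_critOrbit_succ_one (hd : 2 ≤ d) (i : ℕ) : (critOrbit R d (i + 1)).coeff 1 = 1 := by
  have hX2 : (X : R[X]) ^ 2 ∣ critOrbit R d i ^ d :=
    (pow_dvd_pow_of_dvd (X_dvd_critOrbit (by omega) i) 2).trans (pow_dvd_pow _ hd)
  rw [critOrbit_succ, coeff_add, X_pow_dvd_iff.mp hX2 1 one_lt_two, coeff_X_one, zero_add]

theorem monic_critOrbit_succ_and_natDegree [Nontrivial R] (hd : 2 ≤ d) (i : ℕ) :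
    (critOrbit R d (i + 1)).Monic ∧ (critOrbit R d (i + 1)).natDegree = d ^ i := by
  induction i with
  | zero => rw [zero_add, critOrbit_one (by omega), pow_zero]; exact ⟨monic_X, natDegree_X⟩
  | succ i ih =>
    obtain ⟨hmon, hdeg⟩ := ih
    have hpow : (critOrbit R d (i + 1) ^ d).natDegree = d ^ (i + 1) := by
      rw [hmon.natDegree_pow, hdeg, pow_succ, mul_comm]
    have hlt : (X : R[X]).natDegree < (critOrbit R d (i + 1) ^ d).natDegree := by
      rw [natDegree_X, hpow]
      exact Nat.one_lt_pow (by omega) (by omega)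
    rw [critOrbit_succ, natDegree_add_eq_left_of_natDegree_lt hlt, hpow]
    exact ⟨(hmon.pow d).add_of_left (degree_lt_degree hlt), rfl⟩

theorem critOrbit_succ_sub_critOrbit {q : ℕ} [ExpChar R q] (e i : ℕ) :
    critOrbit R (q ^ e) (i + 1) - critOrbit R (q ^ e) i = X ^ ((q ^ e) ^ i) := by
  induction i with
  | zero => rw [zero_add, critOrbit_one (pow_ne_zero e (expChar_pos R q).ne'), critOrbit_zero,
      sub_zero, pow_zero, pow_one]
  | succ i ih => calc
      critOrbit R (q ^ e) (i + 2) - critOrbit R (q ^ e) (i + 1)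
          = critOrbit R (q ^ e) (i + 1) ^ q ^ e - critOrbit R (q ^ e) i ^ q ^ e :=
        add_sub_add_right_eq_sub _ _ _
      _ = X ^ (q ^ e) ^ (i + 1) := by rw [← sub_pow_expChar_pow, ih, ← pow_mul, pow_succ]

end critOrbit

section misiurewicz

variable {R : Type*} [CommRing R] {d : ℕ}

theorem map_misiurewicz {S : Type*} [CommRing S] (f : R →+* S) (m : ℕ) (θ : R) :
    (misiurewicz R d m θ).map f = misiurewicz S d m (f θ) := by
  rw [misiurewicz, map_divByMonic f monic_X, Polynomial.map_sub, Polynomial.map_mul, map_C,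
    map_critOrbit, map_critOrbit, map_X, misiurewicz]

theorem X_mul_misiurewicz (hd : d ≠ 0) (m : ℕ) (θ : R) :
    X * misiurewicz R d m θ = critOrbit R d m - C θ * critOrbit R d (m - 1) := by
  obtain ⟨g, hg⟩ : X ∣ critOrbit R d m - C θ * critOrbit R d (m - 1) :=
    dvd_sub (X_dvd_critOrbit hd m) ((X_dvd_critOrbit hd _).mul_left _)
  rw [misiurewicz, hg, mul_divByMonic_cancel_left _ monic_X]

theorem monic_critOrbit_sub_C_mul_and_natDegree [Nontrivial R] (hd : 2 ≤ d) (j : ℕ) (θ : R) :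
    (critOrbit R d (j + 2) - C θ * critOrbit R d (j + 1)).Monic ∧
      (critOrbit R d (j + 2) - C θ * critOrbit R d (j + 1)).natDegree = d ^ (j + 1) := by
  obtain ⟨hmon₂, hdeg₂⟩ := monic_critOrbit_succ_and_natDegree (R := R) hd (j + 1)
  obtain ⟨hmon₁, hdeg₁⟩ := monic_critOrbit_succ_and_natDegree (R := R) hd j
  have hlt : (C θ * critOrbit R d (j + 1)).natDegree < (critOrbit R d (j + 2)).natDegree := by
    refine (natDegree_C_mul_le _ _).trans_lt ?_
    rw [hdeg₁, hdeg₂]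
    exact Nat.pow_lt_pow_right (by omega) (by omega)
  rw [natDegree_sub_eq_left_of_natDegree_lt hlt, hdeg₂]
  exact ⟨hmon₂.sub_of_left (degree_lt_degree hlt), rfl⟩

theorem monic_misiurewicz_and_natDegree [Nontrivial R] (hd : 2 ≤ d) (j : ℕ) (θ : R) :
    (misiurewicz R d (j + 2) θ).Monic ∧ (misiurewicz R d (j + 2) θ).natDegree = d ^ (j + 1) - 1 := by
  obtain ⟨hmon, hdeg⟩ := monic_critOrbit_sub_C_mul_and_natDegree (R := R) hd j θ
  have hX := X_mul_misiurewicz (R := R) (by omega : d ≠ 0) (j + 2) θ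
  refine ⟨monic_X.of_mul_monic_left (hX ▸ hmon), ?_⟩
  rw [misiurewicz, natDegree_divByMonic _ monic_X, natDegree_X]
  exact congrArg (· - 1) hdeg

theorem coeff_misiurewicz_zero (hd : 2 ≤ d) (j : ℕ) (θ : R) :
    (misiurewicz R d (j + 2) θ).coeff 0 = 1 - θ := by
  rw [← coeff_X_mul, X_mul_misiurewicz (by omega), coeff_sub, coeff_C_mul, zero_add,
    show j + 2 - 1 = j + 1 from rfl, coeff_critOrbit_succ_one hd, coeff_critOrbit_succ_one hd, mul_one]

theorem misiurewicz_one_eq_X_pow {q : ℕ} [ExpChar R q] (e i : ℕ) :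
    misiurewicz R (q ^ e) (i + 1) 1 = X ^ ((q ^ e) ^ i - 1) := by
  have hpos : 0 < (q ^ e) ^ i := pow_pos (pow_pos (expChar_pos R q) e) i
  rw [misiurewicz, C_1, one_mul, Nat.add_sub_cancel, critOrbit_succ_sub_critOrbit,
    ← Nat.sub_add_cancel hpos, pow_succ', Nat.add_sub_cancel, mul_divByMonic_cancel_left _ monic_X]

end misiurewicz

theorem Monic.isEisensteinAt_of_map_eq_X_pow {R : Type*} [CommRing R] {f : R[X]} {P : Ideal R}
    (hf : f.Monic) (hP : P ≠ ⊤) (hmap : f.map (Ideal.Quotient.mk P) = X ^ f.natDegree)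
    (h0 : f.coeff 0 ∉ P ^ 2) : f.IsEisensteinAt P where
  leading := by rwa [hf.leadingCoeff, ← Ideal.ne_top_iff_one]
  mem hn := by
    rw [← Ideal.Quotient.eq_zero_iff_mem, ← coeff_map, hmap, coeff_X_pow, if_neg hn.ne]
  notMem := h0

theorem isEisensteinAt_misiurewicz {R : Type*} [CommRing R] {P : Ideal R} (hP : P ≠ ⊤)
    {p : ℕ} (hp : p.Prime) (hpP : (p : R) ∈ P) {e : ℕ} (he : e ≠ 0) {θ : R} (hθ : θ - 1 ∈ P)
    (hθ2 : θ - 1 ∉ P ^ 2) (j : ℕ) : (misiurewicz R (p ^ e) (j + 2) θ).IsEisensteinAt P := by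
  have : Nontrivial (R ⧸ P) := (Ideal.Quotient.nontrivial_iff (I := P)).2 hP
  have : Nontrivial R := (Ideal.Quotient.mk_surjective (I := P)).nontrivial
  have : Fact p.Prime := ⟨hp⟩
  have : CharP (R ⧸ P) p := (CharP.charP_iff_prime_eq_zero hp).2 <| by
    rwa [← map_natCast (Ideal.Quotient.mk P), Ideal.Quotient.eq_zero_iff_mem]
  have hθ1 : Ideal.Quotient.mk P θ = 1 := by
    rwa [← sub_eq_zero, ← map_one (Ideal.Quotient.mk P), ← map_sub, Ideal.Quotient.eq_zero_iff_mem]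
  have hd : 2 ≤ p ^ e := hp.two_le.trans (Nat.le_self_pow he p)
  obtain ⟨hmon, hdeg⟩ := monic_misiurewicz_and_natDegree (R := R) hd j θ
  refine hmon.isEisensteinAt_of_map_eq_X_pow hP ?_ ?_
  · rw [map_misiurewicz, hθ1, misiurewicz_one_eq_X_pow, hdeg]
  · rwa [coeff_misiurewicz_zero hd, ← neg_sub, neg_mem_iff]

theorem irreducible_misiurewicz {R K : Type*} [CommRing R] [IsDomain R] [IsIntegrallyClosed R]
    [Field K] [Algebra R K] [IsFractionRing R K] {P : Ideal R} (hP : P.IsPrime)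
    {p : ℕ} (hp : p.Prime) (hpP : (p : R) ∈ P) {e : ℕ} (he : e ≠ 0) {θ : R} (hθ : θ - 1 ∈ P)
    (hθ2 : θ - 1 ∉ P ^ 2) (j : ℕ) :
    Irreducible (misiurewicz K (p ^ e) (j + 2) (algebraMap R K θ)) := by
  have hd : 2 ≤ p ^ e := hp.two_le.trans (Nat.le_self_pow he p)
  obtain ⟨hmon, hdeg⟩ := monic_misiurewicz_and_natDegree (R := R) hd j θ
  rw [← map_misiurewicz, ← hmon.irreducible_iff_irreducible_map_fraction_map]
  refine (isEisensteinAt_misiurewicz hP.ne_top hp hpP he hθ hθ2 j).irreducible hP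
    hmon.isPrimitive ?_
  rw [hdeg, Nat.sub_pos_iff_lt]
  exact Nat.one_lt_pow j.succ_ne_zero hd

end Polynomial

theorem exists_isPrimitiveRoot_prime_pow {M : Type*} [CommMonoid M] {ζ : M} {p e : ℕ}
    (hp : p.Prime) (hζ : ζ ^ p ^ e = 1) (hζ1 : ζ ≠ 1) : ∃ k, IsPrimitiveRoot ζ (p ^ (k + 1)) := by
  obtain ⟨f, -, hf⟩ := (Nat.dvd_prime_pow hp).1 (orderOf_dvd_of_pow_eq_one hζ)
  cases f with
  | zero => exact absurd (orderOf_eq_one_iff.1 hf) hζ1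
  | succ k => exact ⟨k, hf ▸ IsPrimitiveRoot.orderOf ζ⟩

theorem IsPrimitiveRoot.isCyclotomicExtension_of_adjoin_eq_top {A B : Type*} [CommRing A]
    [CommRing B] [Algebra A B] {ζ : B} {n : ℕ} (hn : n ≠ 0) (hζ : IsPrimitiveRoot ζ n)
    (h : Algebra.adjoin A {ζ} = ⊤) : IsCyclotomicExtension {n} A B := by
  refine (IsCyclotomicExtension.iff_adjoin_eq_top _ _ _).2
    ⟨fun _ hm _ => ⟨ζ, Set.mem_singleton_iff.1 hm ▸ hζ⟩, top_unique (h ▸ Algebra.adjoin_mono ?_)⟩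
  exact Set.singleton_subset_iff.2 ⟨n, rfl, hn, hζ.pow_eq_one⟩

/-- d = p^e a prime power, m ≥ 2, ζ ≠ 1 a d-th root of unity,
K = ℚ(ζ). The Misiurewicz polynomial G^ζ_{d,m,1} = (a_m − ζ a_{m−1})/a_1,
where a_1 = X (the variable c), is irreducible over ℚ(ζ). -/
theorem stmt13 (p e : ℕ) (hp : p.Prime) (he : 1 ≤ e) (d : ℕ) (hd : d = p ^ e)
    (m : ℕ) (hm : 2 ≤ m)
    (K : Type*) [Field K] [CharZero K]
    (ζ : K) (hζd : ζ ^ d = 1) (hζ1 : ζ ≠ 1)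
    (hK : Algebra.adjoin ℚ {ζ} = ⊤)
    (a : ℕ → Polynomial K) (ha0 : a 0 = 0)
    (haS : ∀ i, a (i + 1) = a i ^ d + Polynomial.X) :
    Irreducible ((a m - Polynomial.C ζ * a (m - 1)) /ₘ Polynomial.X) := by
  subst hd
  have : Fact p.Prime := ⟨hp⟩
  obtain ⟨k, hζ⟩ := exists_isPrimitiveRoot_prime_pow hp hζd hζ1
  have : IsCyclotomicExtension {p ^ (k + 1)} ℚ K :=
    hζ.isCyclotomicExtension_of_adjoin_eq_top (pow_ne_zero _ hp.ne_zero) hK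
  have : NumberField K := IsCyclotomicExtension.numberField {p ^ (k + 1)} ℚ K
  have hπ : Prime (hζ.toInteger - 1) := hζ.zeta_sub_one_prime
  obtain ⟨j, rfl⟩ : ∃ j, m = j + 2 := ⟨m - 2, by omega⟩
  rw [eq_critOrbit ha0 haS]
  refine irreducible_misiurewicz (R := 𝓞 K) ((Ideal.span_singleton_prime hπ.ne_zero).2 hπ) hp
    (Ideal.mem_span_singleton.2 (mod_cast hζ.toInteger_sub_one_dvd_prime))
    (by omega) (Ideal.mem_span_singleton_self _) ?_ j
  rw [Ideal.span_singleton_pow, Ideal.mem_span_singleton]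
  intro h
  have := (pow_dvd_pow_iff (n := 2) (m := 1) hπ.ne_zero hπ.not_isUnit).1 (by rwa [pow_one])
  omega
end

section
/- Let m > n ≥ 1 be positive integers, let Φ_m denote the m-th cyclotomic polynomial, and let ζ be a primitive n-th root of unity. Then Φ_m(ζ) is not a unit in ℤ[ζ] if and only if m = p^k·n for some prime p and integer k ≥ 1. -/
open Polynomial

/-- In a field of characteristic `p`, an element is a root of the `t`-th cyclotomic
polynomial iff it is a primitive root of unity of order the `p`-free part of `t`. -/
lemma stmt14_aux_charP {F : Type*} [Field F] {p : ℕ} [hp : Fact p.Prime] [CharP F p]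
    {t : ℕ} (ht : 0 < t) {z : F} :
    (Polynomial.cyclotomic t F).IsRoot z ↔
      IsPrimitiveRoot z (t / p ^ t.factorization p) := by
  have h2 : ¬ p ∣ t / p ^ t.factorization p := Nat.not_dvd_ordCompl hp.out ht.ne'
  haveI : NeZero ((t / p ^ t.factorization p : ℕ) : F) :=
    ⟨fun h => h2 ((CharP.cast_eq_zero_iff F p _).mp h)⟩
  conv_lhs => rw [← Nat.ordProj_mul_ordCompl_eq_self t p]
  exact isRoot_cyclotomic_prime_pow_mul_iff_of_charP

/-- Abstract core of statement 14: in a nontrivial commutative ring in which no prime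
number is invertible, if `z` is a root of the `n`-th cyclotomic polynomial then
`Φ_m(z)` is a non-unit iff `m = p^k * n`. -/
theorem stmt14_aux {A : Type*} [CommRing A] [Nontrivial A] (m n : ℕ)
    (hn : 1 ≤ n) (hmn : n < m)
    (hpnu : ∀ p : ℕ, p.Prime → ¬ IsUnit ((p : ℕ) : A))
    (z : A) (hroot : Polynomial.aeval z (Polynomial.cyclotomic n ℤ) = 0) :
    ¬ IsUnit (Polynomial.aeval z (Polynomial.cyclotomic m ℤ)) ↔
      ∃ (p k : ℕ), p.Prime ∧ 1 ≤ k ∧ m = p ^ k * n := by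
  have hm : 0 < m := lt_trans hn hmn
  have hquot : ∀ (P : Ideal A) (t : ℕ),
      (Ideal.Quotient.mk P) (Polynomial.aeval z (Polynomial.cyclotomic t ℤ)) =
        Polynomial.eval ((Ideal.Quotient.mk P) z) (Polynomial.cyclotomic t (A ⧸ P)) := by
    intro P t
    have h := Polynomial.aeval_algHom_apply (Ideal.Quotient.mkₐ ℤ P) z
      (Polynomial.cyclotomic t ℤ)
    simp only [Ideal.Quotient.mkₐ_eq_mk] at h
    rw [← h, Polynomial.aeval_def, ← Polynomial.eval_map, Polynomial.map_cyclotomic]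
  constructor
  · -- non-unit ⟹ m = p^k n
    intro hx
    obtain ⟨P, hPmax, hxP⟩ := exists_max_ideal_of_mem_nonunits (mem_nonunits_iff.mpr hx)
    haveI : P.IsMaximal := hPmax
    letI : Field (A ⧸ P) := Ideal.Quotient.field P
    set w : A ⧸ P := (Ideal.Quotient.mk P) z with hw
    have hzm : (Polynomial.cyclotomic m (A ⧸ P)).IsRoot w := by
      have h := (Ideal.Quotient.eq_zero_iff_mem).mpr hxP
      rw [hquot P m] at h
      exact h
    have hzn : (Polynomial.cyclotomic n (A ⧸ P)).IsRoot w := by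
      have h : (Ideal.Quotient.mk P) (Polynomial.aeval z (Polynomial.cyclotomic n ℤ)) = 0 := by
        rw [hroot]; simp
      rw [hquot P n] at h
      exact h
    obtain ⟨c, hc⟩ := CharP.exists (A ⧸ P)
    haveI := hc
    rcases CharP.char_is_prime_or_zero (A ⧸ P) c with hcp | rfl
    · -- char p case
      haveI : Fact c.Prime := ⟨hcp⟩
      rw [stmt14_aux_charP (p := c) hm] at hzm
      rw [stmt14_aux_charP (p := c) hn] at hzn
      have heq : m / c ^ m.factorization c = n / c ^ n.factorization c := hzm.unique hzn
      set a := n.factorization c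
      set b := m.factorization c
      have hmm : c ^ b * (m / c ^ b) = m := Nat.ordProj_mul_ordCompl_eq_self m c
      have hnn : c ^ a * (n / c ^ a) = n := Nat.ordProj_mul_ordCompl_eq_self n c
      have hab : a < b := by
        by_contra hba
        push_neg at hba
        have : m ≤ n := by
          calc m = c ^ b * (m / c ^ b) := hmm.symm
            _ = c ^ b * (n / c ^ a) := by rw [heq]
            _ ≤ c ^ a * (n / c ^ a) :=
                Nat.mul_le_mul_right _ (Nat.pow_le_pow_right hcp.pos hba)
            _ = n := hnn
        omega
      refine ⟨c, b - a, hcp, by omega, ?_⟩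
      calc m = c ^ b * (m / c ^ b) := hmm.symm
        _ = c ^ ((b - a) + a) * (n / c ^ a) := by rw [heq, Nat.sub_add_cancel hab.le]
        _ = c ^ (b - a) * (c ^ a * (n / c ^ a)) := by rw [pow_add, mul_assoc]
        _ = c ^ (b - a) * n := by rw [hnn]
    · -- char 0 case : impossible
      haveI : CharZero (A ⧸ P) := CharP.charP_to_charZero _
      haveI : NeZero ((m : ℕ) : A ⧸ P) := ⟨Nat.cast_ne_zero.mpr hm.ne'⟩
      haveI : NeZero ((n : ℕ) : A ⧸ P) := ⟨Nat.cast_ne_zero.mpr (Nat.one_le_iff_ne_zero.mp hn)⟩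
      rw [Polynomial.isRoot_cyclotomic_iff] at hzm hzn
      exact absurd (hzm.unique hzn) (by omega)
  · -- m = p^k n ⟹ non-unit
    rintro ⟨p, k, hp, hk, rfl⟩ hu
    haveI : Fact p.Prime := ⟨hp⟩
    obtain ⟨P, hPmax, hle⟩ := Ideal.exists_le_maximal (Ideal.span {((p : ℕ) : A)})
      (fun h => hpnu p hp (Ideal.span_singleton_eq_top.mp h))
    haveI : P.IsMaximal := hPmax
    letI : Field (A ⧸ P) := Ideal.Quotient.field P
    have hpP : ((p : ℕ) : A) ∈ P := hle (Ideal.subset_span rfl)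
    haveI hcharp : CharP (A ⧸ P) p := by
      have h0 : ((p : ℕ) : A ⧸ P) = 0 := by
        rw [← map_natCast (Ideal.Quotient.mk P)]
        exact Ideal.Quotient.eq_zero_iff_mem.mpr hpP
      obtain ⟨c, hc⟩ := CharP.exists (A ⧸ P)
      have hcd : c ∣ p := by
        haveI := hc
        exact (CharP.cast_eq_zero_iff (A ⧸ P) c p).mp h0
      rcases (Nat.Prime.eq_one_or_self_of_dvd hp c hcd) with h1 | h1
      · exact absurd h1 (by haveI := hc; exact CharP.char_ne_one (A ⧸ P) c)
      · rwa [h1] at hc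
    set w : A ⧸ P := (Ideal.Quotient.mk P) z with hw
    have hzn : (Polynomial.cyclotomic n (A ⧸ P)).IsRoot w := by
      have h : (Ideal.Quotient.mk P) (Polynomial.aeval z (Polynomial.cyclotomic n ℤ)) = 0 := by
        rw [hroot]; simp
      rw [hquot P n] at h
      exact h
    rw [stmt14_aux_charP (p := p) hn] at hzn
    set a := n.factorization p with ha
    have hnn : p ^ a * (n / p ^ a) = n := Nat.ordProj_mul_ordCompl_eq_self n p
    have hpn' : ¬ p ∣ n / p ^ a := Nat.not_dvd_ordCompl hp (Nat.one_le_iff_ne_zero.mp hn)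
    haveI : NeZero (((n / p ^ a : ℕ)) : A ⧸ P) :=
      ⟨fun h => hpn' ((CharP.cast_eq_zero_iff (A ⧸ P) p _).mp h)⟩
    have hroot2 : (Polynomial.cyclotomic (p ^ k * n) (A ⧸ P)).IsRoot w := by
      have hrw : p ^ k * n = p ^ (k + a) * (n / p ^ a) := by
        conv_lhs => rw [← hnn]
        ring
      rw [hrw]
      exact isRoot_cyclotomic_prime_pow_mul_iff_of_charP.mpr hzn
    have hmem : Polynomial.aeval z (Polynomial.cyclotomic (p ^ k * n) ℤ) ∈ P := by
      rw [← Ideal.Quotient.eq_zero_iff_mem, hquot P (p ^ k * n)]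
      exact hroot2
    exact hPmax.ne_top (Ideal.eq_top_of_isUnit_mem _ hmem hu)

/-- Lehmer: For m > n ≥ 1 and ζ a primitive n-th root of unity,
Φ_m(ζ) is not a unit in ℤ[ζ] iff m = p^k·n for some prime p and k ≥ 1. -/
theorem stmt14 (m n : ℕ) (hn : 1 ≤ n) (hmn : n < m)
    (ζ : ℂ) (hζ : IsPrimitiveRoot ζ n) :
    ¬ IsUnit (Polynomial.aeval
        (⟨ζ, Algebra.self_mem_adjoin_singleton ℤ ζ⟩ : Algebra.adjoin ℤ {ζ})
        (Polynomial.cyclotomic m ℤ)) ↔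
      ∃ (p k : ℕ), p.Prime ∧ 1 ≤ k ∧ m = p ^ k * n := by
  haveI : Nontrivial (Algebra.adjoin ℤ {ζ}) :=
    ⟨⟨0, 1, fun h => zero_ne_one (congrArg Subtype.val h)⟩⟩
  set R := Algebra.adjoin ℤ {ζ} with hR
  set zR : R := ⟨ζ, Algebra.self_mem_adjoin_singleton ℤ ζ⟩ with hzR
  haveI : Algebra.IsIntegral ℤ R :=
    Algebra.IsIntegral.adjoin (by rintro x rfl; exact hζ.isIntegral hn)
  -- no prime is invertible in R
  have hpnu : ∀ p : ℕ, p.Prime → ¬ IsUnit ((p : ℕ) : R) := by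
    intro p hp h
    obtain ⟨u, hu'⟩ := h.exists_left_inv
    have hint : IsIntegral ℤ ((u : R) : ℂ) :=
      (Algebra.IsIntegral.isIntegral (R := ℤ) u).map (R.val : R →ₐ[ℤ] ℂ)
    have huv : ((u : R) : ℂ) * (p : ℂ) = 1 := by
      have h2 := congrArg (fun x : R => (x : ℂ)) hu'
      push_cast at h2
      simpa using h2
    have hpc : ((p : ℕ) : ℂ) ≠ 0 := Nat.cast_ne_zero.mpr hp.pos.ne'
    have hval : ((u : R) : ℂ) = algebraMap ℚ ℂ ((p : ℚ)⁻¹) := by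
      have h3 : algebraMap ℚ ℂ ((p : ℚ)⁻¹) * ((p : ℕ) : ℂ) = 1 := by
        rw [map_inv₀]
        push_cast
        field_simp
      calc ((u : R) : ℂ) = ((u : R) : ℂ) * (algebraMap ℚ ℂ ((p : ℚ)⁻¹) * ((p : ℕ) : ℂ)) := by
            rw [h3, mul_one]
        _ = (((u : R) : ℂ) * ((p : ℕ) : ℂ)) * algebraMap ℚ ℂ ((p : ℚ)⁻¹) := by ring
        _ = algebraMap ℚ ℂ ((p : ℚ)⁻¹) := by rw [huv, one_mul]
    rw [hval] at hint
    have hint' : IsIntegral ℤ ((p : ℚ)⁻¹) := by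
      have hinj : Function.Injective (algebraMap ℚ ℂ) := (algebraMap ℚ ℂ).injective
      exact (isIntegral_algHom_iff (IsScalarTower.toAlgHom ℤ ℚ ℂ) hinj).mp hint
    obtain ⟨y, hy⟩ := IsIntegrallyClosed.isIntegral_iff.mp hint'
    have hyq : (y : ℚ) * (p : ℚ) = 1 := by
      rw [show ((y : ℤ) : ℚ) = (p : ℚ)⁻¹ from hy]
      have : ((p : ℕ) : ℚ) ≠ 0 := Nat.cast_ne_zero.mpr hp.pos.ne'
      field_simp
    have hyz : y * (p : ℤ) = 1 := by exact_mod_cast hyq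
    have hdvd : ((p : ℕ) : ℤ) ∣ 1 := Dvd.intro_left y hyz
    have hp1 : ((p : ℕ) : ℤ) = 1 := Int.eq_one_of_dvd_one (by positivity) hdvd
    have : p = 1 := by exact_mod_cast hp1
    exact hp.one_lt.ne' this
  -- ζ is a root of the n-th cyclotomic polynomial, already inside R
  have hrootn : Polynomial.aeval zR (Polynomial.cyclotomic n ℤ) = 0 := by
    have h : (R.val : R →ₐ[ℤ] ℂ) (Polynomial.aeval zR (Polynomial.cyclotomic n ℤ)) = 0 := by
      rw [← Polynomial.aeval_algHom_apply]
      have hz : (R.val : R →ₐ[ℤ] ℂ) zR = ζ := rfl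
      rw [hz, Polynomial.aeval_def, ← Polynomial.eval_map, Polynomial.map_cyclotomic]
      exact hζ.isRoot_cyclotomic hn
    exact Subtype.ext (by simpa using h)
  exact stmt14_aux m n hn hmn hpnu zR hrootn
end

section
/- Let d, m ≥ 2, n ≥ 1 with n | m−1, and ζ ≠ 1 a d-th root of unity. Let α ∈ ℚ̄ be a root of the Gleason polynomial G_{d,0,n} = ∏_{k|n} a_k^{μ(n/k)}, and let i be a positive divisor of n. Then a_{m+i−1}(α) = ζ·a_{m−1}(α) if and only if i = n. -/
open Polynomial Function

/-!
Evaluated at `α`, the polynomials `a k` trace the orbit of `0` under `z ↦ z ^ d + α`, so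
`a k (α) = 0` exactly when the period `p` of `0` divides `k`. Since `n ∣ m - 1`, once `p = n`
is known we get `a (m - 1) (α) = 0` and `a (m + i - 1) (α) = a i (α)`, which vanishes iff `n ∣ i`.

That `p = n` is seen on orders of vanishing at `α`. From `a p ^ d ∣ a ((j + 1) p) - a p` and
`d ≥ 2`, every `a (j p)` vanishes at `α` to the same order `e` as `a p`, while `a k (α) ≠ 0` for
`p ∤ k`. Hence the order of `G = ∏ a k ^ μ (n / k)` at `α` is `e * ∑_{p ∣ k ∣ n} μ (n / k)`,
which is `0` unless `p = n`.
-/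

section RootMultiplicity

variable {R : Type*} [CommRing R]

theorem ne_zero_of_algebraMap_eq_prod_zpow {K : Type*} [Field K] [Algebra R[X] K]
    [IsFractionRing R[X] K] {ι : Type*} (s : Finset ι) {G : R[X]} (f : ι → R[X]) (z : ι → ℤ)
    (hf : ∀ i ∈ s, f i ≠ 0)
    (hG : algebraMap R[X] K G = ∏ i ∈ s, algebraMap R[X] K (f i) ^ z i) :
    G ≠ 0 := by
  rintro rfl
  refine Finset.prod_ne_zero_iff.mpr (fun i hi => zpow_ne_zero _ ?_)
    (hG.symm.trans (map_zero _))
  exact (map_ne_zero_iff _ (IsFractionRing.injective R[X] K)).mpr (hf i hi)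

theorem rootMultiplicity_prod_pow [IsDomain R] {ι : Type*} (s : Finset ι) (f : ι → R[X])
    (e : ι → ℕ) (hf : ∀ i ∈ s, f i ≠ 0) (α : R) :
    rootMultiplicity α (∏ i ∈ s, f i ^ e i) = ∑ i ∈ s, e i * rootMultiplicity α (f i) := by
  classical
  have hprod : ∏ i ∈ s, f i ^ e i ≠ 0 :=
    Finset.prod_ne_zero_iff.mpr fun i hi => pow_ne_zero _ (hf i hi)
  rw [← count_roots, roots_prod _ _ hprod, Multiset.count_bind]
  simp [count_roots, Finset.sum_map_val]

theorem rootMultiplicity_eq_sum_mul_of_algebraMap_eq_prod_zpow [IsDomain R] {K : Type*}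
    [Field K] [Algebra R[X] K] [IsFractionRing R[X] K] {ι : Type*} (s : Finset ι) {G : R[X]}
    (f : ι → R[X]) (z : ι → ℤ) (hf : ∀ i ∈ s, f i ≠ 0)
    (hG : algebraMap R[X] K G = ∏ i ∈ s, algebraMap R[X] K (f i) ^ z i) (α : R) :
    (rootMultiplicity α G : ℤ) = ∑ i ∈ s, z i * rootMultiplicity α (f i) := by
  have hinj : Injective (algebraMap R[X] K) := IsFractionRing.injective _ _
  have hfK : ∀ i ∈ s, algebraMap R[X] K (f i) ≠ 0 := fun i hi =>
    (map_ne_zero_iff _ hinj).mpr (hf i hi)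
  have hcleared : G * ∏ i ∈ s, f i ^ (-z i).toNat = ∏ i ∈ s, f i ^ (z i).toNat := by
    apply hinj
    simp only [map_mul, map_prod, map_pow, hG, ← Finset.prod_mul_distrib]
    refine Finset.prod_congr rfl fun i hi => ?_
    rw [← zpow_natCast, ← zpow_natCast, ← zpow_add₀ (hfK i hi)]
    congr 1
    omega
  have hprod0 : ∏ i ∈ s, f i ^ (-z i).toNat ≠ 0 :=
    Finset.prod_ne_zero_iff.mpr fun i hi => pow_ne_zero _ (hf i hi)
  have h := congrArg (rootMultiplicity α) hcleared
  have hG0 := ne_zero_of_algebraMap_eq_prod_zpow s f z hf hG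
  rw [rootMultiplicity_mul (mul_ne_zero hG0 hprod0), rootMultiplicity_prod_pow _ _ _ hf,
    rootMultiplicity_prod_pow _ _ _ hf] at h
  have hZ : (rootMultiplicity α G : ℤ) + ∑ i ∈ s, ((-z i).toNat * rootMultiplicity α (f i) : ℤ)
      = ∑ i ∈ s, ((z i).toNat * rootMultiplicity α (f i) : ℤ) := by
    exact_mod_cast h
  rw [eq_sub_of_add_eq hZ, ← Finset.sum_sub_distrib]
  refine Finset.sum_congr rfl fun i _ => ?_
  rw [← sub_mul, Int.toNat_sub_toNat_neg]

end RootMultiplicity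

theorem sum_moebius_div_of_dvd {n p : ℕ} (hn : n ≠ 0) (hp : p ∣ n) :
    ∑ k ∈ n.divisors with p ∣ k, ArithmeticFunction.moebius (n / k) =
      if p = n then 1 else 0 := by
  rw [Finset.sum_filter, ← Nat.sum_div_divisors]
  have hterm : ∀ k ∈ n.divisors,
      (if p ∣ n / k then ArithmeticFunction.moebius (n / (n / k)) else 0) =
        if k ∣ n / p then ArithmeticFunction.moebius k else 0 := by
    intro k hk
    have hkn := Nat.dvd_of_mem_divisors hk
    simp_rw [Nat.div_div_self hkn hn, Nat.dvd_div_iff_mul_dvd hkn, Nat.dvd_div_iff_mul_dvd hp,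
      mul_comm]
  rw [Finset.sum_congr rfl hterm, ← Finset.sum_filter,
    Nat.divisors_filter_dvd_of_dvd hn (Nat.div_dvd_of_dvd hp),
    ← ArithmeticFunction.coe_mul_zeta_apply, ArithmeticFunction.moebius_mul_coe_zeta,
    ArithmeticFunction.one_apply]
  have hp0 : 0 < p := Nat.pos_of_dvd_of_pos hp (Nat.pos_of_ne_zero hn)
  simp only [Nat.div_eq_iff_eq_mul_left hp0 hp, one_mul, eq_comm]

namespace GleasonSeq

section Recurrence

variable {R : Type*} [CommRing R] {d : ℕ} {c : R} {a : ℕ → R}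

theorem pow_dvd_shift_sub (ha0 : a 0 = 0) (haS : ∀ i, a (i + 1) = a i ^ d + c) (p : ℕ) :
    ∀ k, a p ^ d ∣ a (k + 1 + p) - a (k + 1)
  | 0 => by
    rw [zero_add, add_comm, haS, haS, ha0, add_sub_add_right_eq_sub]
    rcases d.eq_zero_or_pos with rfl | hd
    · simp
    · simp [zero_pow hd.ne']
  | k + 1 => by
    rw [show k + 1 + 1 + p = k + 1 + p + 1 by ring, haS, haS, add_sub_add_right_eq_sub]
    exact (pow_dvd_shift_sub ha0 haS p k).trans (sub_dvd_pow_sub_pow _ _ d)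

theorem pow_dvd_mul_sub (ha0 : a 0 = 0) (haS : ∀ i, a (i + 1) = a i ^ d + c)
    {p : ℕ} (hp : 0 < p) : ∀ j, a p ^ d ∣ a ((j + 1) * p) - a p
  | 0 => by simp
  | j + 1 => by
    obtain ⟨k, hk⟩ : ∃ k, (j + 1) * p = k + 1 :=
      Nat.exists_eq_add_one.mpr (Nat.mul_pos j.succ_pos hp)
    have hstep := pow_dvd_shift_sub ha0 haS p k
    rw [← hk] at hstep
    rw [show (j + 1 + 1) * p = (j + 1) * p + p by ring,
      ← sub_add_sub_cancel _ (a ((j + 1) * p))]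
    exact dvd_add hstep (pow_dvd_mul_sub ha0 haS hp j)

end Recurrence

section Polynomial

variable {R : Type*} [CommRing R] {d : ℕ} {a : ℕ → R[X]}

theorem eval_eq_iterate (ha0 : a 0 = 0) (haS : ∀ i, a (i + 1) = a i ^ d + X) (α : R) :
    ∀ k, eval α (a k) = (fun z => z ^ d + α)^[k] 0
  | 0 => by simp [ha0]
  | k + 1 => by
    rw [iterate_succ_apply', ← eval_eq_iterate ha0 haS α k, haS]
    simp

theorem eval_eq_zero_iff_minimalPeriod_dvd (ha0 : a 0 = 0) (haS : ∀ i, a (i + 1) = a i ^ d + X)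
    (α : R) (k : ℕ) : eval α (a k) = 0 ↔ minimalPeriod (fun z => z ^ d + α) 0 ∣ k := by
  rw [← isPeriodicPt_iff_minimalPeriod_dvd, eval_eq_iterate ha0 haS]
  rfl

theorem eval_add_eq_of_eval_eq_zero (ha0 : a 0 = 0) (haS : ∀ i, a (i + 1) = a i ^ d + X)
    {α : R} {q : ℕ} (hq : eval α (a q) = 0) (k : ℕ) : eval α (a (k + q)) = eval α (a k) := by
  rw [eval_eq_iterate ha0 haS, iterate_add_apply, ← eval_eq_iterate ha0 haS, hq,
    eval_eq_iterate ha0 haS]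

theorem ne_zero_of_pos [IsDomain R] (hd : 2 ≤ d) (haS : ∀ i, a (i + 1) = a i ^ d + X) {k : ℕ}
    (hk : 0 < k) : a k ≠ 0 := by
  obtain ⟨k, rfl⟩ := Nat.exists_eq_add_one.mpr hk
  intro h
  have hdeg := congrArg natDegree (eq_neg_of_add_eq_zero_left ((haS k).symm.trans h))
  rw [natDegree_pow, natDegree_neg, natDegree_X] at hdeg
  have := Nat.eq_one_of_mul_eq_one_right hdeg
  omega

theorem rootMultiplicity_succ_mul [IsDomain R] (hd : 2 ≤ d) (ha0 : a 0 = 0)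
    (haS : ∀ i, a (i + 1) = a i ^ d + X) {p : ℕ} (hp : 0 < p) {α : R} (hα : eval α (a p) = 0)
    (j : ℕ) : rootMultiplicity α (a ((j + 1) * p)) = rootMultiplicity α (a p) := by
  obtain ⟨h, hh⟩ := pow_dvd_mul_sub ha0 haS hp j
  set u := 1 + a p ^ (d - 1) * h
  have hfactor : a ((j + 1) * p) = a p * u := by
    rw [← sub_add_cancel (a ((j + 1) * p)) (a p), hh]
    obtain ⟨e, rfl⟩ : ∃ e, d = e + 1 := ⟨d - 1, by omega⟩
    simp only [u, Nat.add_sub_cancel]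
    ring
  have hu : eval α u = 1 := by
    simp [u, hα, zero_pow (show d - 1 ≠ 0 by omega)]
  have hap : a p ≠ 0 := ne_zero_of_pos hd haS hp
  have hu0 : u ≠ 0 := fun h0 => by simp [h0] at hu
  rw [hfactor, rootMultiplicity_mul (mul_ne_zero hap hu0),
    rootMultiplicity_eq_zero (p := u) (by simp [IsRoot, hu]), add_zero]

theorem minimalPeriod_eq_of_isRoot_gleason [IsDomain R] {K : Type*} [Field K]
    [Algebra R[X] K] [IsFractionRing R[X] K] (hd : 2 ≤ d) (ha0 : a 0 = 0)
    (haS : ∀ i, a (i + 1) = a i ^ d + X) {n : ℕ} (hn : n ≠ 0) {G : R[X]}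
    (hG : algebraMap R[X] K G =
      ∏ k ∈ n.divisors, algebraMap R[X] K (a k) ^ ArithmeticFunction.moebius (n / k))
    {α : R} (hGα : eval α G = 0) :
    minimalPeriod (fun z => z ^ d + α) 0 = n := by
  set p := minimalPeriod (fun z => z ^ d + α) 0
  have hzero (k : ℕ) : eval α (a k) = 0 ↔ p ∣ k :=
    eval_eq_zero_iff_minimalPeriod_dvd ha0 haS α k
  have hak : ∀ k ∈ n.divisors, a k ≠ 0 := fun k hk =>
    ne_zero_of_pos hd haS (Nat.pos_of_mem_divisors hk)
  have hmultG := rootMultiplicity_eq_sum_mul_of_algebraMap_eq_prod_zpow _ _ _ hak hG α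
  have hGpos : 0 < rootMultiplicity α G :=
    (rootMultiplicity_pos (ne_zero_of_algebraMap_eq_prod_zpow _ _ _ hak hG)).mpr hGα
  have hsum : ∑ k ∈ n.divisors,
      ArithmeticFunction.moebius (n / k) * (rootMultiplicity α (a k) : ℤ) ≠ 0 := by
    rw [← hmultG]; omega
  obtain ⟨k, hk, hk0⟩ := Finset.exists_ne_zero_of_sum_ne_zero hsum
  have hpk : p ∣ k := (hzero k).mp <| by
    by_contra h
    simp [rootMultiplicity_eq_zero h] at hk0
  have hpn : p ∣ n := hpk.trans (Nat.dvd_of_mem_divisors hk)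
  have hp0 : 0 < p := Nat.pos_of_dvd_of_pos hpk (Nat.pos_of_mem_divisors hk)
  have hmult_a : ∀ k ∈ n.divisors,
      rootMultiplicity α (a k) = if p ∣ k then rootMultiplicity α (a p) else 0 := by
    intro k hk
    split_ifs with h
    · obtain ⟨j, rfl⟩ := h
      obtain ⟨j, rfl⟩ := Nat.exists_eq_add_one.mpr
        (Nat.pos_of_mul_pos_left (Nat.pos_of_mem_divisors hk))
      rw [mul_comm, rootMultiplicity_succ_mul hd ha0 haS hp0 ((hzero p).mpr dvd_rfl)]
    · exact rootMultiplicity_eq_zero (mt (hzero k).mp h)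
  have hmultG' :
      (rootMultiplicity α G : ℤ) = rootMultiplicity α (a p) * if p = n then 1 else 0 := by
    rw [hmultG, ← sum_moebius_div_of_dvd hn hpn, Finset.sum_filter, Finset.mul_sum]
    refine Finset.sum_congr rfl fun k hk => ?_
    rw [hmult_a k hk]
    split_ifs <;> simp [mul_comm]
  by_contra hpn'
  rw [if_neg hpn', mul_zero] at hmultG'
  omega

end Polynomial

end GleasonSeq

theorem stmt16_general (d m n : ℕ) (hd : 2 ≤ d) (hm : 2 ≤ m) (hn : 1 ≤ n)
    (hndvd : n ∣ m - 1)
    (F : Type*) [Field F]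
    (ζ : F)
    (a : ℕ → Polynomial F) (ha0 : a 0 = 0)
    (haS : ∀ i, a (i + 1) = a i ^ d + Polynomial.X)
    (α : F)
    (hα : ∃ G : Polynomial F,
      algebraMap (Polynomial F) (RatFunc F) G =
        (∏ k ∈ n.divisors, (algebraMap (Polynomial F) (RatFunc F) (a k)) ^
          (ArithmeticFunction.moebius (n / k))) ∧
      Polynomial.eval α G = 0)
    (i : ℕ) (hi : i ∣ n) :
    Polynomial.eval α (a (m + i - 1)) = ζ * Polynomial.eval α (a (m - 1)) ↔
      i = n := by
  obtain ⟨G, hG, hGα⟩ := hα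
  have hperiod := GleasonSeq.minimalPeriod_eq_of_isRoot_gleason hd ha0 haS (by omega) hG hGα
  have hzero (k : ℕ) : eval α (a k) = 0 ↔ n ∣ k :=
    hperiod ▸ GleasonSeq.eval_eq_zero_iff_minimalPeriod_dvd ha0 haS α k
  have hm1 : eval α (a (m - 1)) = 0 := (hzero _).mpr hndvd
  have hmi : eval α (a (m + i - 1)) = eval α (a i) := by
    rw [show m + i - 1 = i + (m - 1) by omega]
    exact GleasonSeq.eval_add_eq_of_eval_eq_zero ha0 haS hm1 i
  rw [hmi, hm1, mul_zero, hzero]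
  exact ⟨Nat.dvd_antisymm hi, fun h => h ▸ dvd_rfl⟩

/-- d, m ≥ 2, n ≥ 1 with n ∣ m−1, ζ ≠ 1 a d-th root of unity.
If α is a root of the Gleason polynomial G_{d,0,n} = ∏_{k∣n} a_k^{μ(n/k)}
(a polynomial G whose image in the rational function field equals that Möbius
product), and i is a positive divisor of n, then
a_{m+i−1}(α) = ζ a_{m−1}(α) ⟺ i = n. -/
theorem stmt16 (d m n : ℕ) (hd : 2 ≤ d) (hm : 2 ≤ m) (hn : 1 ≤ n)
    (hndvd : n ∣ m - 1)
    (F : Type*) [Field F] [CharZero F] [IsAlgClosed F]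
    (ζ : F) (hζd : ζ ^ d = 1) (hζ1 : ζ ≠ 1)
    (a : ℕ → Polynomial F) (ha0 : a 0 = 0)
    (haS : ∀ i, a (i + 1) = a i ^ d + Polynomial.X)
    (α : F)
    (hα : ∃ G : Polynomial F,
      algebraMap (Polynomial F) (RatFunc F) G =
        (∏ k ∈ n.divisors, (algebraMap (Polynomial F) (RatFunc F) (a k)) ^
          (ArithmeticFunction.moebius (n / k))) ∧
      Polynomial.eval α G = 0)
    (i : ℕ) (hi : i ∣ n) (hipos : 0 < i) :
    Polynomial.eval α (a (m + i - 1)) = ζ * Polynomial.eval α (a (m - 1)) ↔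
      i = n :=
  stmt16_general d m n hd hm hn hndvd F ζ a ha0 haS α hα i hi
end

section
/- Let d = p^e be a prime power, c₀ a root of G^ζ_{d,m,n} with m ≥ 2, n ≥ 1, ζ ≠ 1 a d-th root of unity, K = ℚ(c₀). Suppose j > m and ℓ ≥ 1 with ℓ not divisible by n. Then a_{j+ℓ−1}(c₀) − ζ·a_{j−1}(c₀) is a unit in O_K, i.e., ⟨a_{j+ℓ−1}(c₀) − ζ·a_{j−1}(c₀)⟩ = O_K. -/
set_option maxHeartbeats 1000000
set_option synthInstance.maxHeartbeats 1000000

open NumberField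

section PeriodAux

variable {α : Type*}

/-- Forward propagation of a period for a sequence defined by iterating a map. -/
private lemma per_ge (b : ℕ → α) (F : α → α) (hstep : ∀ i, b (i + 1) = F (b i))
    (m n : ℕ) (h : b (m + n) = b m) : ∀ i, m ≤ i → b (i + n) = b i := by
  have key : ∀ k, b (m + k + n) = b (m + k) := by
    intro k
    induction k with
    | zero => simpa using h
    | succ k ih =>
      have e1 : m + (k + 1) + n = (m + k + n) + 1 := by omega
      rw [e1, hstep, ih]
      exact (hstep (m + k)).symm
  intro i hi
  obtain ⟨k, rfl⟩ := Nat.exists_eq_add_of_le hi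
  exact key k

/-- Multiples of a period are periods. -/
private lemma per_mul (b : ℕ → α) (m n : ℕ) (h : ∀ i, m ≤ i → b (i + n) = b i) :
    ∀ s i, m ≤ i → b (i + s * n) = b i := by
  intro s
  induction s with
  | zero => intro i _; simp
  | succ s ih =>
    intro i hi
    have e1 : i + (s + 1) * n = (i + s * n) + n := by ring
    rw [e1, h _ (by omega), ih i hi]

/-- If `n` is a period from index `m` and `ℓ` is a period from index `j ≥ m`, then
`gcd n ℓ` is a period from index `m`. -/
private lemma per_gcd (b : ℕ → α) (F : α → α) (hstep : ∀ i, b (i + 1) = F (b i))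
    (m n ℓ j : ℕ) (hn : 1 ≤ n) (hpn : b (m + n) = b m) (hj : m ≤ j)
    (hpl : b (j + ℓ) = b j) :
    ∀ i, m ≤ i → b (i + Nat.gcd n ℓ) = b i := by
  have Pn : ∀ i, m ≤ i → b (i + n) = b i := per_ge b F hstep m n hpn
  have Plj : ∀ i, j ≤ i → b (i + ℓ) = b i := per_ge b F hstep j ℓ hpl
  have Pl : ∀ i, m ≤ i → b (i + ℓ) = b i := by
    intro i hi
    have hjn : j ≤ j * n := by
      calc j = j * 1 := (mul_one j).symm
      _ ≤ j * n := Nat.mul_le_mul_left j hn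
    have h1 : b ((i + ℓ) + j * n) = b (i + ℓ) := per_mul b m n Pn j (i + ℓ) (by omega)
    have h2 : b (i + j * n) = b i := per_mul b m n Pn j i hi
    have h3 : b ((i + j * n) + ℓ) = b (i + j * n) := Plj _ (by omega)
    have e : (i + ℓ) + j * n = (i + j * n) + ℓ := by ring
    rw [e, h3, h2] at h1
    exact h1.symm
  have Psub : ∀ r s, (∀ i, m ≤ i → b (i + r) = b i) → (∀ i, m ≤ i → b (i + s) = b i) →
      ∀ i, m ≤ i → b (i + (s - r)) = b i := by
    intro r s hr hs i hi
    rcases le_or_gt s r with hsr | hsr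
    · have : s - r = 0 := by omega
      simp [this]
    · have h1 : b ((i + (s - r)) + r) = b (i + (s - r)) := hr _ (by omega)
      have e : (i + (s - r)) + r = i + s := by omega
      rw [e, hs i hi] at h1
      exact h1.symm
  have Pmulsub : ∀ k r s, (∀ i, m ≤ i → b (i + r) = b i) → (∀ i, m ≤ i → b (i + s) = b i) →
      ∀ i, m ≤ i → b (i + (s - k * r)) = b i := by
    intro k
    induction k with
    | zero => intro r s _ hs; simpa using hs
    | succ k ih =>
      intro r s hr hs
      have e : s - (k + 1) * r = (s - k * r) - r := by
        rw [Nat.succ_mul]; omega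
      rw [e]
      exact Psub r _ hr (ih r s hr hs)
  have Pmod : ∀ r s, (∀ i, m ≤ i → b (i + r) = b i) → (∀ i, m ≤ i → b (i + s) = b i) →
      ∀ i, m ≤ i → b (i + (s % r)) = b i := by
    intro r s hr hs
    have h3 : s % r + s / r * r = s := Nat.mod_add_div' s r
    have e : s % r = s - (s / r) * r := by
      generalize hB : s / r * r = B at h3 ⊢
      generalize hA : s % r = A at h3 ⊢
      omega
    rw [e]
    exact Pmulsub (s / r) r s hr hs
  have Pgcd : ∀ x y, (∀ i, m ≤ i → b (i + x) = b i) → (∀ i, m ≤ i → b (i + y) = b i) →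
      ∀ i, m ≤ i → b (i + Nat.gcd x y) = b i := by
    intro x y
    induction x, y using Nat.gcd.induction with
    | H0 y => intro _ hy; simpa [Nat.gcd_zero_left] using hy
    | H1 x y hx ih =>
      intro hxP hyP
      rw [Nat.gcd_rec]
      exact ih (Pmod x y hxP hyP) hxP
  exact Pgcd n ℓ Pn Pl

/-- Reduce an index `N ≥ m` into the window `[m, m+n)` using the period `n`. -/
private lemma per_window (b : ℕ → α) (m n : ℕ)
    (hbper : ∀ i, m ≤ i → b (i + n) = b i) (N : ℕ) (hNm : m ≤ N) :
    b (m + (N - m) % n) = b N := by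
  have h1 := per_mul b m n hbper ((N - m) / n) (m + (N - m) % n) (Nat.le_add_right m _)
  have e : m + (N - m) % n + (N - m) / n * n = N := by
    have h3 : (N - m) % n + (N - m) / n * n = N - m := Nat.mod_add_div' (N - m) n
    generalize hB : (N - m) / n * n = B at h3 ⊢
    generalize hA : (N - m) % n = A at h3 ⊢
    omega
  rw [e] at h1
  exact h1.symm

end PeriodAux

section RingAux

variable {R S : Type*} [CommRing R] [IsDomain R] [CommRing S] [Nontrivial S]

/-- The telescoping-product contradiction: if `a` has period `n` from `m`, the shift by
`h` does not fix `a m`, then the product of the geometric-sum factors over one period is `1`;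
hence no such factor can map to `0`. -/
private lemma lemC (π : R →+* S) (a : ℕ → R) (c₀ : R) (d : ℕ)
    (haS : ∀ i, a (i + 1) = a i ^ d + c₀)
    (m n : ℕ) (hn : 1 ≤ n) (hper : a (m + n) = a m)
    (h : ℕ) (hne : a (m + h) ≠ a m)
    (k' : ℕ) (hk1 : m ≤ k') (hk2 : k' < m + n)
    (hPk : π (∑ r ∈ Finset.range d, a (k' + h) ^ r * a k' ^ (d - 1 - r)) = 0) :
    False := by
  have hstepE : ∀ k, a (k + 1 + h) - a (k + 1) =
      (∑ r ∈ Finset.range d, a (k + h) ^ r * a k ^ (d - 1 - r)) * (a (k + h) - a k) := by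
    intro k
    rw [geom_sum₂_mul, show k + 1 + h = (k + h) + 1 by omega, haS, haS]
    ring
  have hprod : ∀ t, a (m + t + h) - a (m + t) =
      (a (m + h) - a m) *
        ∏ i ∈ Finset.range t,
          (∑ r ∈ Finset.range d, a (m + i + h) ^ r * a (m + i) ^ (d - 1 - r)) := by
    intro t
    induction t with
    | zero => simp
    | succ t ih =>
      rw [show m + (t + 1) = (m + t) + 1 by omega, hstepE (m + t), ih,
        Finset.prod_range_succ]
      ring
  have Pa : ∀ i, m ≤ i → a (i + n) = a i :=
    per_ge a (fun x => x ^ d + c₀) haS m n hper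
  have hEper : a (m + n + h) - a (m + n) = a (m + h) - a m := by
    rw [show m + n + h = (m + h) + n by omega, Pa (m + h) (by omega), Pa m le_rfl]
  have hEm : a (m + h) - a m ≠ 0 := sub_ne_zero.mpr hne
  have hprod1 : ∏ i ∈ Finset.range n,
      (∑ r ∈ Finset.range d, a (m + i + h) ^ r * a (m + i) ^ (d - 1 - r)) = 1 := by
    have h1 := hprod n
    rw [hEper] at h1
    exact (mul_left_cancel₀ hEm (by rw [mul_one]; exact h1)).symm
  have h0 : π (∏ i ∈ Finset.range n,
      (∑ r ∈ Finset.range d, a (m + i + h) ^ r * a (m + i) ^ (d - 1 - r))) = 0 := by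
    rw [map_prod]
    refine Finset.prod_eq_zero (i := k' - m) (Finset.mem_range.mpr (by omega)) ?_
    rw [show m + (k' - m) = k' by omega]
    exact hPk
  rw [hprod1, map_one] at h0
  exact one_ne_zero h0

/-- If some `a i₀` with `n ∤ i₀` maps to `0` under `π`, we get a contradiction. -/
private lemma lemA (π : R →+* S) (a : ℕ → R) (c₀ : R) (d : ℕ) (hd2 : 2 ≤ d)
    (haS : ∀ i, a (i + 1) = a i ^ d + c₀) (ha0 : a 0 = 0)
    (m n : ℕ) (hn : 1 ≤ n) (hper : a (m + n) = a m)
    (hnmin : ∀ k, 0 < k → k < n → a (m + k) ≠ a m)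
    (i₀ : ℕ) (hi₀ : 1 ≤ i₀) (hni₀ : ¬ n ∣ i₀) (hz : π (a i₀) = 0) :
    False := by
  have hbstep : ∀ i, π (a (i + 1)) = π (a i) ^ d + π c₀ := by
    intro i; rw [haS i, map_add, map_pow]
  have hb0 : π (a 0) = 0 := by rw [ha0, map_zero]
  have hglob0 : ∀ i, 0 ≤ i → π (a (i + i₀)) = π (a i) :=
    per_ge (fun i => π (a i)) (fun x => x ^ d + π c₀) hbstep 0 i₀
      (by show π (a (0 + i₀)) = π (a 0); rw [Nat.zero_add, hb0, hz])
  have hglob : ∀ i, π (a (i + i₀)) = π (a i) := fun i => hglob0 i (Nat.zero_le i)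
  have hne : a (m + i₀) ≠ a m := by
    intro hcon
    have hg : ∀ i, m ≤ i → a (i + Nat.gcd n i₀) = a i :=
      per_gcd a (fun x => x ^ d + c₀) haS m n i₀ m hn hper le_rfl hcon
    have gpos : 0 < Nat.gcd n i₀ := Nat.gcd_pos_of_pos_left _ hn
    have glt : Nat.gcd n i₀ < n := by
      rcases lt_or_eq_of_le (Nat.le_of_dvd hn (Nat.gcd_dvd_left n i₀)) with hlt | heq
      · exact hlt
      · exact absurd (heq ▸ Nat.gcd_dvd_right n i₀) hni₀
    exact hnmin _ gpos glt (hg m le_rfl)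
  have hmul0 : ∀ t, π (a (t * i₀)) = 0 := by
    intro t
    induction t with
    | zero => simpa using hb0
    | succ t ih =>
      rw [show (t + 1) * i₀ = t * i₀ + i₀ by ring, hglob, ih]
  have hbper : ∀ i, m ≤ i → π (a (i + n)) = π (a i) :=
    per_ge (fun i => π (a i)) (fun x => x ^ d + π c₀) hbstep m n
      (by show π (a (m + n)) = π (a m); rw [hper])
  have hNm : m ≤ m * i₀ := by
    calc m = m * 1 := (mul_one m).symm
    _ ≤ m * i₀ := Nat.mul_le_mul_left m hi₀
  have hrlt : (m * i₀ - m) % n < n := Nat.mod_lt _ hn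
  have hbk' : π (a (m + (m * i₀ - m) % n)) = 0 := by
    have h1 : π (a (m + (m * i₀ - m) % n)) = π (a (m * i₀)) :=
      per_window (fun i => π (a i)) m n hbper (m * i₀) hNm
    rw [h1, hmul0 m]
  have hPk : π (∑ r ∈ Finset.range d,
      a (m + (m * i₀ - m) % n + i₀) ^ r * a (m + (m * i₀ - m) % n) ^ (d - 1 - r)) = 0 := by
    rw [map_sum]
    refine Finset.sum_eq_zero ?_
    intro ρ hρ
    rw [map_mul, map_pow, map_pow, hglob, hbk']
    rcases Nat.eq_zero_or_pos ρ with hρ0 | hρ0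
    · subst hρ0
      rw [pow_zero, one_mul, zero_pow (by omega : d - 1 - 0 ≠ 0)]
    · rw [zero_pow (by omega : ρ ≠ 0), zero_mul]
  exact lemC π a c₀ d haS m n hn hper i₀ hne (m + (m * i₀ - m) % n)
    (Nat.le_add_right _ _) (Nat.add_lt_add_left hrlt m) hPk

end RingAux

/-- d = p^e, c₀ a root of G^ζ_{d,m,n} (Misiurewicz of exact type
(m,n) with a_{m+n−1} = ζ a_{m−1}), K = ℚ(c₀), j > m, ℓ ≥ 1 with n ∤ ℓ. Then
a_{j+ℓ−1}(c₀) − ζ·a_{j−1}(c₀) is a unit in O_K, i.e. generates the unit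
ideal. -/
theorem stmt18 (p e : ℕ) (hp : p.Prime) (he : 1 ≤ e) (d : ℕ) (hd : d = p ^ e)
    (K : Type*) [Field K] [NumberField K]
    (c₀ ζ : 𝓞 K) (hK : Algebra.adjoin ℚ {algebraMap (𝓞 K) K c₀} = ⊤)
    (a : ℕ → 𝓞 K) (ha0 : a 0 = 0) (haS : ∀ i, a (i + 1) = a i ^ d + c₀)
    (m n : ℕ) (hm : 2 ≤ m) (hn : 1 ≤ n)
    (hper : a (m + n) = a m)
    (hnmin : ∀ k, 0 < k → k < n → a (m + k) ≠ a m)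
    (hmmin : ∀ m', m' < m → ∀ k, 0 < k → a (m' + k) ≠ a m')
    (hζd : ζ ^ d = 1) (hζ1 : ζ ≠ 1) (hζ : a (m + n - 1) = ζ * a (m - 1))
    (j ℓ : ℕ) (hj : m < j) (hℓ : 1 ≤ ℓ) (hnℓ : ¬ n ∣ ℓ) :
    Ideal.span {a (j + ℓ - 1) - ζ * a (j - 1)} = (⊤ : Ideal (𝓞 K)) := by
  by_contra hcon
  obtain ⟨𝔮, hQmax, hle⟩ := Ideal.exists_le_maximal _ hcon
  haveI := hQmax.isPrime
  obtain ⟨j', rfl⟩ : ∃ j', j = j' + 1 := ⟨j - 1, by omega⟩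
  have hmj' : m ≤ j' := by omega
  have hd2 : 2 ≤ d := by
    rw [hd]
    calc 2 ≤ p := hp.two_le
    _ = p ^ 1 := (pow_one p).symm
    _ ≤ p ^ e := Nat.pow_le_pow_right hp.pos he
  set π : 𝓞 K →+* (𝓞 K ⧸ 𝔮) := Ideal.Quotient.mk 𝔮 with hπ
  have hu : π (a (j' + 1 + ℓ - 1) - ζ * a (j' + 1 - 1)) = 0 :=
    (Ideal.Quotient.eq_zero_iff_mem).mpr (hle (Ideal.subset_span (Set.mem_singleton _)))
  rw [show j' + 1 + ℓ - 1 = j' + ℓ by omega, show j' + 1 - 1 = j' by omega] at hu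
  have hbu : π (a (j' + ℓ)) = π ζ * π (a j') := by
    have h1 : π (a (j' + ℓ)) - π ζ * π (a j') = 0 := by
      rw [← map_mul, ← map_sub]; exact hu
    exact sub_eq_zero.mp h1
  have hbstep : ∀ i, π (a (i + 1)) = π (a i) ^ d + π c₀ := by
    intro i; rw [haS i, map_add, map_pow]
  have hzd : π ζ ^ d = 1 := by rw [← map_pow, hζd, map_one]
  have hbjl : π (a (j' + 1 + ℓ)) = π (a (j' + 1)) := by
    rw [show j' + 1 + ℓ = (j' + ℓ) + 1 by omega, hbstep, hbstep, hbu, mul_pow, hzd, one_mul]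
  have Pg : ∀ i, m ≤ i → π (a (i + Nat.gcd n ℓ)) = π (a i) :=
    per_gcd (fun i => π (a i)) (fun x => x ^ d + π c₀) hbstep m n ℓ (j' + 1) hn
      (by show π (a (m + n)) = π (a m); rw [hper]) (by omega) hbjl
  have gpos : 0 < Nat.gcd n ℓ := Nat.gcd_pos_of_pos_left _ hn
  have gdvdn : Nat.gcd n ℓ ∣ n := Nat.gcd_dvd_left n ℓ
  have glt : Nat.gcd n ℓ < n := by
    rcases lt_or_eq_of_le (Nat.le_of_dvd hn gdvdn) with hlt | heq
    · exact hlt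
    · exact absurd (heq ▸ Nat.gcd_dvd_right n ℓ) hnℓ
  have hjℓ : π (a (j' + ℓ)) = π (a j') := by
    have h1 : ∀ s i, m ≤ i → π (a (i + s * Nat.gcd n ℓ)) = π (a i) :=
      per_mul (fun i => π (a i)) m (Nat.gcd n ℓ) Pg
    have h2 := h1 (ℓ / Nat.gcd n ℓ) j' hmj'
    rwa [Nat.div_mul_cancel (Nat.gcd_dvd_right n ℓ)] at h2
  have key : (π ζ - 1) * π (a j') = 0 := by
    rw [sub_mul, one_mul, ← hbu, hjℓ, sub_self]
  rcases mul_eq_zero.mp key with hz1 | hz0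
  · -- ζ ≡ 1 mod 𝔮, hence d ≡ 0 mod 𝔮
    have hζS : π ζ = 1 := by rwa [sub_eq_zero] at hz1
    have hsum0 : ∑ i ∈ Finset.range d, ζ ^ i = 0 := by
      have h1 : (∑ i ∈ Finset.range d, ζ ^ i) * (ζ - 1) = 0 := by
        rw [geom_sum_mul, hζd, sub_self]
      rcases mul_eq_zero.mp h1 with h | h
      · exact h
      · exact absurd (by rwa [sub_eq_zero] at h) hζ1
    have hdS : ((d : ℕ) : 𝓞 K ⧸ 𝔮) = 0 := by
      have h1 : π (∑ i ∈ Finset.range d, ζ ^ i) = 0 := by rw [hsum0, map_zero]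
      rw [map_sum] at h1
      simp only [map_pow, hζS, one_pow] at h1
      rwa [Finset.sum_const, Finset.card_range, nsmul_eq_mul, mul_one] at h1
    have hPk : π (∑ r ∈ Finset.range d,
        a (m + Nat.gcd n ℓ) ^ r * a m ^ (d - 1 - r)) = 0 := by
      rw [map_sum]
      have h2 : ∀ r ∈ Finset.range d,
          π (a (m + Nat.gcd n ℓ) ^ r * a m ^ (d - 1 - r)) = π (a m) ^ (d - 1) := by
        intro r hr
        have hr' := Finset.mem_range.mp hr
        rw [map_mul, map_pow, map_pow, Pg m le_rfl, ← pow_add]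
        congr 1
        omega
      rw [Finset.sum_congr rfl h2, Finset.sum_const, Finset.card_range, nsmul_eq_mul, hdS,
        zero_mul]
    exact lemC π a c₀ d haS m n hn hper (Nat.gcd n ℓ) (hnmin _ gpos glt) m le_rfl
      (by omega) hPk
  · -- a j' ≡ 0 mod 𝔮
    have hjg : π (a (j' + Nat.gcd n ℓ)) = 0 := by rw [Pg j' hmj', hz0]
    by_cases hnj : n ∣ j'
    · have hnd : ¬ n ∣ (j' + Nat.gcd n ℓ) := by
        intro hdd
        have h3 : n ∣ Nat.gcd n ℓ := (Nat.dvd_add_right hnj).mp hdd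
        have := Nat.le_of_dvd gpos h3
        omega
      exact lemA π a c₀ d hd2 haS ha0 m n hn hper hnmin (j' + Nat.gcd n ℓ) (by omega) hnd hjg
    · exact lemA π a c₀ d hd2 haS ha0 m n hn hper hnmin j' (by omega) hnj hz0
end
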